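/- arXiv:1111.4325 — 7 statements merged into one kernel-verified Lean document; each statement's English description precedes it below -/
import Mathlib

section
/- Let (H, m, u, Δ, ε, ω, S) be a dual quasi-bialgebra with a preantipode S. Then for all h ∈ H, the equality h₁ S(h₂) = εS(h) 1_H = S(h₁) h₂ holds, where h₁ ⊗ h₂ denotes the comultiplication Δ(h) in Sweedler notation. -/
open TensorProduct LinearMap

noncomputable section

namespace DQB

variable (k : Type*) [CommRing k]
variable (H : Type*) [AddCommGroup H] [Module k H]

/-- Convolution of two `k`-valued functionals on a module `C` equipped with a
comultiplication-like map `δ`. -/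
def conv (C : Type*) [AddCommGroup C] [Module k C]
    (δ : C →ₗ[k] C ⊗[k] C) (f g : C →ₗ[k] k) : C →ₗ[k] k :=
  (LinearMap.mul' k k) ∘ₗ (TensorProduct.map f g) ∘ₗ δ

/-- Convolution `f * g` where `f` is module-valued and `g` is a functional. -/
def convMK (C M : Type*) [AddCommGroup C] [Module k C] [AddCommGroup M] [Module k M]
    (δ : C →ₗ[k] C ⊗[k] C) (f : C →ₗ[k] M) (g : C →ₗ[k] k) : C →ₗ[k] M :=
  (TensorProduct.rid k M).toLinearMap ∘ₗ (TensorProduct.map f g) ∘ₗ δ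

/-- Convolution `g * f` where `g` is a functional and `f` is module-valued. -/
def convKM (C M : Type*) [AddCommGroup C] [Module k C] [AddCommGroup M] [Module k M]
    (δ : C →ₗ[k] C ⊗[k] C) (g : C →ₗ[k] k) (f : C →ₗ[k] M) : C →ₗ[k] M :=
  (TensorProduct.lid k M).toLinearMap ∘ₗ (TensorProduct.map g f) ∘ₗ δ

/-- `(a ⊗ b) ⊗ c ↦ (a ⊗ c) ⊗ b`. -/
def exch (A B C : Type*) [AddCommGroup A] [Module k A] [AddCommGroup B] [Module k B]
    [AddCommGroup C] [Module k C] : (A ⊗[k] B) ⊗[k] C →ₗ[k] (A ⊗[k] C) ⊗[k] B :=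
  (TensorProduct.assoc k A C B).symm.toLinearMap
    ∘ₗ lTensor A (TensorProduct.comm k B C).toLinearMap
    ∘ₗ (TensorProduct.assoc k A B C).toLinearMap

/-- `a ⊗ (b ⊗ c) ↦ b ⊗ (a ⊗ c)`. -/
def exch' (A B C : Type*) [AddCommGroup A] [Module k A] [AddCommGroup B] [Module k B]
    [AddCommGroup C] [Module k C] : A ⊗[k] (B ⊗[k] C) →ₗ[k] B ⊗[k] (A ⊗[k] C) :=
  (TensorProduct.assoc k B A C).toLinearMap
    ∘ₗ rTensor C (TensorProduct.comm k A B).toLinearMap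
    ∘ₗ (TensorProduct.assoc k A B C).symm.toLinearMap

variable (Δ : H →ₗ[k] H ⊗[k] H) (ε : H →ₗ[k] k)

/-- `h ↦ h₁ ⊗ (h₂ ⊗ h₃)`. -/
def comul2 : H →ₗ[k] H ⊗[k] (H ⊗[k] H) := (lTensor H Δ) ∘ₗ Δ

/-- The codiagonal comultiplication of `H ⊗ H`. -/
def comulT : H ⊗[k] H →ₗ[k] (H ⊗[k] H) ⊗[k] (H ⊗[k] H) :=
  (TensorProduct.tensorTensorTensorComm k H H H H).toLinearMap ∘ₗ TensorProduct.map Δ Δ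

/-- The codiagonal comultiplication of `H ⊗ (H ⊗ H)`. -/
def comul3 : H ⊗[k] (H ⊗[k] H) →ₗ[k] (H ⊗[k] (H ⊗[k] H)) ⊗[k] (H ⊗[k] (H ⊗[k] H)) :=
  (TensorProduct.tensorTensorTensorComm k H H (H ⊗[k] H) (H ⊗[k] H)).toLinearMap
    ∘ₗ TensorProduct.map Δ (comulT k H Δ)

/-- The codiagonal comultiplication of `H ⊗ (H ⊗ (H ⊗ H))`. -/
def comul4 : H ⊗[k] (H ⊗[k] (H ⊗[k] H)) →ₗ[k]
    (H ⊗[k] (H ⊗[k] (H ⊗[k] H))) ⊗[k] (H ⊗[k] (H ⊗[k] (H ⊗[k] H))) :=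
  (TensorProduct.tensorTensorTensorComm k H H
      (H ⊗[k] (H ⊗[k] H)) (H ⊗[k] (H ⊗[k] H))).toLinearMap
    ∘ₗ TensorProduct.map Δ (comul3 k H Δ)

/-- The codiagonal counit of `H ⊗ H`. -/
def counit2 : H ⊗[k] H →ₗ[k] k := (LinearMap.mul' k k) ∘ₗ TensorProduct.map ε ε

/-- The codiagonal counit of `H ⊗ (H ⊗ H)`. -/
def counit3 : H ⊗[k] (H ⊗[k] H) →ₗ[k] k :=
  (LinearMap.mul' k k) ∘ₗ TensorProduct.map ε (counit2 k H ε)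

variable (μ : H ⊗[k] H →ₗ[k] H) (e : H) (ω ωInv : H ⊗[k] (H ⊗[k] H) →ₗ[k] k)

/-- A dual quasi-bialgebra structure on `H`, with comultiplication `Δ`, counit `ε`,
multiplication `μ` (a coalgebra map, unitary and quasi-associative), unit `e`, and
unital 3-cocycle `ω` with convolution inverse `ωInv`. -/
structure IsDualQuasiBialgebra : Prop where
  coassoc : (TensorProduct.assoc k H H H).toLinearMap ∘ₗ (rTensor H Δ) ∘ₗ Δ =
    (lTensor H Δ) ∘ₗ Δ
  counit_comul : (TensorProduct.lid k H).toLinearMap ∘ₗ (rTensor H ε) ∘ₗ Δ = LinearMap.id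
  comul_counit : (TensorProduct.rid k H).toLinearMap ∘ₗ (lTensor H ε) ∘ₗ Δ = LinearMap.id
  mul_comul : Δ ∘ₗ μ = (TensorProduct.map μ μ)
    ∘ₗ (TensorProduct.tensorTensorTensorComm k H H H H).toLinearMap ∘ₗ TensorProduct.map Δ Δ
  mul_counit : ε ∘ₗ μ = counit2 k H ε
  comul_one : Δ e = e ⊗ₜ[k] e
  counit_one : ε e = 1
  one_mul : ∀ h : H, μ (e ⊗ₜ[k] h) = h
  mul_one : ∀ h : H, μ (h ⊗ₜ[k] e) = h
  omega_invL : conv k (H ⊗[k] (H ⊗[k] H)) (comul3 k H Δ) ω ωInv = counit3 k H ε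
  omega_invR : conv k (H ⊗[k] (H ⊗[k] H)) (comul3 k H Δ) ωInv ω = counit3 k H ε
  omega_unital₁ : ∀ h l : H, ω (e ⊗ₜ[k] (h ⊗ₜ[k] l)) = ε h * ε l
  omega_unital₂ : ∀ h l : H, ω (h ⊗ₜ[k] (e ⊗ₜ[k] l)) = ε h * ε l
  omega_unital₃ : ∀ h l : H, ω (h ⊗ₜ[k] (l ⊗ₜ[k] e)) = ε h * ε l
  quasi_assoc : convMK k (H ⊗[k] (H ⊗[k] H)) H (comul3 k H Δ) (μ ∘ₗ lTensor H μ) ω =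
    convKM k (H ⊗[k] (H ⊗[k] H)) H (comul3 k H Δ) ω
      (μ ∘ₗ rTensor H μ ∘ₗ (TensorProduct.assoc k H H H).symm.toLinearMap)
  cocycle : conv k (H ⊗[k] (H ⊗[k] (H ⊗[k] H))) (comul4 k H Δ)
      (ω ∘ₗ lTensor H (lTensor H μ))
      (ω ∘ₗ rTensor (H ⊗[k] H) μ ∘ₗ (TensorProduct.assoc k H H (H ⊗[k] H)).symm.toLinearMap) =
    conv k (H ⊗[k] (H ⊗[k] (H ⊗[k] H))) (comul4 k H Δ)
      (conv k (H ⊗[k] (H ⊗[k] (H ⊗[k] H))) (comul4 k H Δ)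
        ((LinearMap.mul' k k) ∘ₗ TensorProduct.map ε ω)
        (ω ∘ₗ lTensor H (rTensor H μ ∘ₗ (TensorProduct.assoc k H H H).symm.toLinearMap)))
      ((LinearMap.mul' k k) ∘ₗ TensorProduct.map ω ε
        ∘ₗ (TensorProduct.assoc k H (H ⊗[k] H) H).symm.toLinearMap
        ∘ₗ lTensor H (TensorProduct.assoc k H H H).symm.toLinearMap)

/-- A preantipode `S` for a dual quasi-bialgebra. -/
structure IsPreantipode (S : H →ₗ[k] H) : Prop where
  cond1 : (rTensor H μ) ∘ₗ exch k H H H ∘ₗ (rTensor H (Δ ∘ₗ S)) ∘ₗ Δ =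
    (TensorProduct.mk k H H e) ∘ₗ S
  cond2 : (lTensor H μ) ∘ₗ exch' k H H H ∘ₗ (lTensor H (Δ ∘ₗ S)) ∘ₗ Δ =
    ((TensorProduct.mk k H H).flip e) ∘ₗ S
  cond3 : ω ∘ₗ (lTensor H (rTensor H S)) ∘ₗ comul2 k H Δ = ε

end DQB

open DQB TensorProduct LinearMap in
/-- If `(H, μ, e, Δ, ε, ω)` is a dual quasi-bialgebra over a field `k` with
preantipode `S`, then `h₁ S(h₂) = ε(S h) • 1_H = S(h₁) h₂` for all `h`. -/
theorem preantipode_mul_eq (k : Type*) [Field k] (H : Type*) [AddCommGroup H] [Module k H]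
    (Δ : H →ₗ[k] H ⊗[k] H) (ε : H →ₗ[k] k) (μ : H ⊗[k] H →ₗ[k] H) (e : H)
    (ω ωInv : H ⊗[k] (H ⊗[k] H) →ₗ[k] k) (S : H →ₗ[k] H)
    (hH : IsDualQuasiBialgebra k H Δ ε μ e ω ωInv)
    (hS : IsPreantipode k H Δ ε μ e ω S) :
    μ ∘ₗ lTensor H S ∘ₗ Δ = LinearMap.toSpanSingleton k H e ∘ₗ (ε ∘ₗ S) ∧
    μ ∘ₗ rTensor H S ∘ₗ Δ = LinearMap.toSpanSingleton k H e ∘ₗ (ε ∘ₗ S) := by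
  set F : H ⊗[k] H →ₗ[k] H := (TensorProduct.lid k H).toLinearMap ∘ₗ rTensor H ε with hF
  set G : H ⊗[k] H →ₗ[k] H := (TensorProduct.rid k H).toLinearMap ∘ₗ lTensor H ε with hG
  have hFΔ : F ∘ₗ (Δ ∘ₗ S) = S := by
    rw [← LinearMap.comp_assoc, hF, LinearMap.comp_assoc Δ, hH.counit_comul, LinearMap.id_comp]
  have hGΔ : G ∘ₗ (Δ ∘ₗ S) = S := by
    rw [← LinearMap.comp_assoc, hG, LinearMap.comp_assoc Δ, hH.comul_counit, LinearMap.id_comp]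
  have mid1 : F ∘ₗ lTensor H μ ∘ₗ exch' k H H H = μ ∘ₗ lTensor H F := by
    apply TensorProduct.ext'
    intro a t
    induction t with
    | zero => simp
    | add x y hx hy =>
      simp only [LinearMap.comp_apply] at hx hy
      simp [tmul_add, hx, hy]
    | tmul x y =>
      simp [hF, exch', TensorProduct.smul_tmul']
      rw [TensorProduct.smul_tmul, TensorProduct.tmul_smul]
      simp
  have mid2 : G ∘ₗ rTensor H μ ∘ₗ exch k H H H = μ ∘ₗ rTensor H G := by
    apply TensorProduct.ext'
    intro t c
    induction t with
    | zero => simp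
    | add x y hx hy =>
      simp only [LinearMap.comp_apply] at hx hy
      simp [add_tmul, hx, hy]
    | tmul x y =>
      simp [hG, exch, TensorProduct.smul_tmul']
      rw [← TensorProduct.smul_tmul', map_smul]
  have aux1 : F ∘ₗ (lTensor H μ ∘ₗ exch' k H H H ∘ₗ lTensor H (Δ ∘ₗ S)) =
      μ ∘ₗ lTensor H S := by
    calc F ∘ₗ (lTensor H μ ∘ₗ exch' k H H H ∘ₗ lTensor H (Δ ∘ₗ S))
        = (F ∘ₗ lTensor H μ ∘ₗ exch' k H H H) ∘ₗ lTensor H (Δ ∘ₗ S) := by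
          simp only [LinearMap.comp_assoc]
      _ = (μ ∘ₗ lTensor H F) ∘ₗ lTensor H (Δ ∘ₗ S) := by rw [mid1]
      _ = μ ∘ₗ lTensor H (F ∘ₗ (Δ ∘ₗ S)) := by rw [LinearMap.comp_assoc, ← lTensor_comp]
      _ = μ ∘ₗ lTensor H S := by rw [hFΔ]
  have aux2 : G ∘ₗ (rTensor H μ ∘ₗ exch k H H H ∘ₗ rTensor H (Δ ∘ₗ S)) =
      μ ∘ₗ rTensor H S := by
    calc G ∘ₗ (rTensor H μ ∘ₗ exch k H H H ∘ₗ rTensor H (Δ ∘ₗ S))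
        = (G ∘ₗ rTensor H μ ∘ₗ exch k H H H) ∘ₗ rTensor H (Δ ∘ₗ S) := by
          simp only [LinearMap.comp_assoc]
      _ = (μ ∘ₗ rTensor H G) ∘ₗ rTensor H (Δ ∘ₗ S) := by rw [mid2]
      _ = μ ∘ₗ rTensor H (G ∘ₗ (Δ ∘ₗ S)) := by rw [LinearMap.comp_assoc, ← rTensor_comp]
      _ = μ ∘ₗ rTensor H S := by rw [hGΔ]
  constructor
  · apply LinearMap.ext
    intro h
    have h2 := congrArg F (LinearMap.congr_fun hS.cond2 h)
    have lhs : F ((lTensor H μ ∘ₗ exch' k H H H ∘ₗ lTensor H (Δ ∘ₗ S) ∘ₗ Δ) h) =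
        (μ ∘ₗ lTensor H S) (Δ h) := by
      have := LinearMap.congr_fun aux1 (Δ h)
      simpa using this
    rw [lhs] at h2
    simpa [hF, TensorProduct.smul_tmul'] using h2
  · apply LinearMap.ext
    intro h
    have h2 := congrArg G (LinearMap.congr_fun hS.cond1 h)
    have lhs : G ((rTensor H μ ∘ₗ exch k H H H ∘ₗ rTensor H (Δ ∘ₗ S) ∘ₗ Δ) h) =
        (μ ∘ₗ rTensor H S) (Δ h) := by
      have := LinearMap.congr_fun aux2 (Δ h)
      simpa using this
    rw [lhs] at h2
    simpa [hG] using h2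
end
end

section
/- Let (H, m, u, Δ, ε, ω, S) be a dual quasi-bialgebra with a preantipode S. If H is cocommutative, then the multiplication m is associative, so (H, m, u, Δ, ε) is an ordinary bialgebra. -/
open TensorProduct LinearMap

noncomputable section

namespace DQBAux

open DQB TensorProduct LinearMap

variable {k : Type*} [CommRing k]

/-- Compose-with-tail helper for rewriting inside right-associated composition chains. -/
theorem cct {W X Y Z P : Type*} [AddCommGroup W] [Module k W] [AddCommGroup X] [Module k X]
    [AddCommGroup Y] [Module k Y] [AddCommGroup Z] [Module k Z] [AddCommGroup P] [Module k P]
    (f₁ : Y →ₗ[k] Z) (f₂ : X →ₗ[k] Y) (g₁ : W →ₗ[k] Z) (g₂ : X →ₗ[k] W)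
    (h : f₁ ∘ₗ f₂ = g₁ ∘ₗ g₂) (t : P →ₗ[k] X) :
    f₁ ∘ₗ (f₂ ∘ₗ t) = g₁ ∘ₗ (g₂ ∘ₗ t) := by
  rw [← LinearMap.comp_assoc, h, LinearMap.comp_assoc]

/-- Three-factor compose-with-tail helper. -/
theorem cct3 {V X Y Z P : Type*} [AddCommGroup V] [Module k V] [AddCommGroup X] [Module k X]
    [AddCommGroup Y] [Module k Y] [AddCommGroup Z] [Module k Z] [AddCommGroup P] [Module k P]
    (f₁ : Y →ₗ[k] Z) (f₂ : X →ₗ[k] Y) (f₃ : V →ₗ[k] X) (g : V →ₗ[k] Z)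
    (h : f₁ ∘ₗ (f₂ ∘ₗ f₃) = g) (t : P →ₗ[k] V) :
    f₁ ∘ₗ (f₂ ∘ₗ (f₃ ∘ₗ t)) = g ∘ₗ t := by
  rw [← h]
  simp only [LinearMap.comp_assoc]

section TensorCoalgebra

variable {A B : Type*} [AddCommGroup A] [Module k A] [AddCommGroup B] [Module k B]

/-- Tensor-product comultiplication. -/
def delT (δA : A →ₗ[k] A ⊗[k] A) (δB : B →ₗ[k] B ⊗[k] B) :
    A ⊗[k] B →ₗ[k] (A ⊗[k] B) ⊗[k] (A ⊗[k] B) :=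
  (TensorProduct.tensorTensorTensorComm k A A B B).toLinearMap ∘ₗ TensorProduct.map δA δB

theorem delT_cocomm (δA : A →ₗ[k] A ⊗[k] A) (δB : B →ₗ[k] B ⊗[k] B)
    (hA : (TensorProduct.comm k A A).toLinearMap ∘ₗ δA = δA)
    (hB : (TensorProduct.comm k B B).toLinearMap ∘ₗ δB = δB) :
    (TensorProduct.comm k (A ⊗[k] B) (A ⊗[k] B)).toLinearMap ∘ₗ delT δA δB = delT δA δB := by
  have struct : (TensorProduct.comm k (A ⊗[k] B) (A ⊗[k] B)).toLinearMap ∘ₗ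
      (TensorProduct.tensorTensorTensorComm k A A B B).toLinearMap =
      (TensorProduct.tensorTensorTensorComm k A A B B).toLinearMap ∘ₗ
        TensorProduct.map (TensorProduct.comm k A A).toLinearMap
          (TensorProduct.comm k B B).toLinearMap := by
    ext a₁ a₂ b₁ b₂
    simp
  rw [delT, ← LinearMap.comp_assoc, struct, LinearMap.comp_assoc, ← TensorProduct.map_comp,
    hA, hB]

theorem delT_counit (δA : A →ₗ[k] A ⊗[k] A) (δB : B →ₗ[k] B ⊗[k] B)
    (εA : A →ₗ[k] k) (εB : B →ₗ[k] k)
    (hA : (TensorProduct.lid k A).toLinearMap ∘ₗ (rTensor A εA) ∘ₗ δA = LinearMap.id)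
    (hB : (TensorProduct.lid k B).toLinearMap ∘ₗ (rTensor B εB) ∘ₗ δB = LinearMap.id) :
    (TensorProduct.lid k (A ⊗[k] B)).toLinearMap ∘ₗ
      (rTensor (A ⊗[k] B) ((LinearMap.mul' k k) ∘ₗ TensorProduct.map εA εB)) ∘ₗ delT δA δB =
      LinearMap.id := by
  have struct : (TensorProduct.lid k (A ⊗[k] B)).toLinearMap ∘ₗ
      ((rTensor (A ⊗[k] B) ((LinearMap.mul' k k) ∘ₗ TensorProduct.map εA εB)) ∘ₗ
        (TensorProduct.tensorTensorTensorComm k A A B B).toLinearMap) =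
      TensorProduct.map ((TensorProduct.lid k A).toLinearMap ∘ₗ (rTensor A εA))
        ((TensorProduct.lid k B).toLinearMap ∘ₗ (rTensor B εB)) := by
    ext a₁ a₂ b₁ b₂
    simp [TensorProduct.smul_tmul', mul_smul]
    rw [smul_comm]
  show (TensorProduct.lid k (A ⊗[k] B)).toLinearMap ∘ₗ
      ((rTensor (A ⊗[k] B) ((LinearMap.mul' k k) ∘ₗ TensorProduct.map εA εB)) ∘ₗ
        ((TensorProduct.tensorTensorTensorComm k A A B B).toLinearMap ∘ₗ
          TensorProduct.map δA δB)) = LinearMap.id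
  rw [cct3 _ _ _ _ struct (TensorProduct.map δA δB), ← TensorProduct.map_comp]
  simp only [LinearMap.comp_assoc]
  rw [hA, hB, TensorProduct.map_id]

theorem delT_coassoc (δA : A →ₗ[k] A ⊗[k] A) (δB : B →ₗ[k] B ⊗[k] B)
    (hA : (TensorProduct.assoc k A A A).toLinearMap ∘ₗ (rTensor A δA) ∘ₗ δA =
      (lTensor A δA) ∘ₗ δA)
    (hB : (TensorProduct.assoc k B B B).toLinearMap ∘ₗ (rTensor B δB) ∘ₗ δB =
      (lTensor B δB) ∘ₗ δB) :
    (TensorProduct.assoc k (A ⊗[k] B) (A ⊗[k] B) (A ⊗[k] B)).toLinearMap ∘ₗ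
      (rTensor (A ⊗[k] B) (delT δA δB)) ∘ₗ delT δA δB =
      (lTensor (A ⊗[k] B) (delT δA δB)) ∘ₗ delT δA δB := by
  have S1 : rTensor (A ⊗[k] B) (delT δA δB) ∘ₗ
      (TensorProduct.tensorTensorTensorComm k A A B B).toLinearMap =
      (rTensor (A ⊗[k] B) (TensorProduct.tensorTensorTensorComm k A A B B).toLinearMap ∘ₗ
        (TensorProduct.tensorTensorTensorComm k (A ⊗[k] A) A (B ⊗[k] B) B).toLinearMap) ∘ₗ
        TensorProduct.map (rTensor A δA) (rTensor B δB) := by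
    ext a₁ a₂ b₁ b₂
    simp [delT]
  have S2 : lTensor (A ⊗[k] B) (delT δA δB) ∘ₗ
      (TensorProduct.tensorTensorTensorComm k A A B B).toLinearMap =
      (lTensor (A ⊗[k] B) (TensorProduct.tensorTensorTensorComm k A A B B).toLinearMap ∘ₗ
        (TensorProduct.tensorTensorTensorComm k A (A ⊗[k] A) B (B ⊗[k] B)).toLinearMap) ∘ₗ
        TensorProduct.map (lTensor A δA) (lTensor B δB) := by
    ext a₁ a₂ b₁ b₂
    simp [delT]
  have S3 : (TensorProduct.assoc k (A ⊗[k] B) (A ⊗[k] B) (A ⊗[k] B)).toLinearMap ∘ₗ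
      (rTensor (A ⊗[k] B) (TensorProduct.tensorTensorTensorComm k A A B B).toLinearMap ∘ₗ
        (TensorProduct.tensorTensorTensorComm k (A ⊗[k] A) A (B ⊗[k] B) B).toLinearMap) =
      (lTensor (A ⊗[k] B) (TensorProduct.tensorTensorTensorComm k A A B B).toLinearMap ∘ₗ
        (TensorProduct.tensorTensorTensorComm k A (A ⊗[k] A) B (B ⊗[k] B)).toLinearMap) ∘ₗ
        TensorProduct.map (TensorProduct.assoc k A A A).toLinearMap
          (TensorProduct.assoc k B B B).toLinearMap := by
    ext a₁ a₂ a₃ b₁ b₂ b₃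
    simp
  show (TensorProduct.assoc k (A ⊗[k] B) (A ⊗[k] B) (A ⊗[k] B)).toLinearMap ∘ₗ
      (rTensor (A ⊗[k] B) (delT δA δB)) ∘ₗ
        ((TensorProduct.tensorTensorTensorComm k A A B B).toLinearMap ∘ₗ
          TensorProduct.map δA δB) =
      (lTensor (A ⊗[k] B) (delT δA δB)) ∘ₗ
        ((TensorProduct.tensorTensorTensorComm k A A B B).toLinearMap ∘ₗ
          TensorProduct.map δA δB)
  have L1 : rTensor (A ⊗[k] B) (delT δA δB) ∘ₗ
      ((TensorProduct.tensorTensorTensorComm k A A B B).toLinearMap ∘ₗ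
        TensorProduct.map δA δB) =
      (rTensor (A ⊗[k] B) (TensorProduct.tensorTensorTensorComm k A A B B).toLinearMap ∘ₗ
        (TensorProduct.tensorTensorTensorComm k (A ⊗[k] A) A (B ⊗[k] B) B).toLinearMap) ∘ₗ
        (TensorProduct.map (rTensor A δA) (rTensor B δB) ∘ₗ TensorProduct.map δA δB) :=
    by rw [← LinearMap.comp_assoc, S1, LinearMap.comp_assoc]
  have L2 : lTensor (A ⊗[k] B) (delT δA δB) ∘ₗ
      ((TensorProduct.tensorTensorTensorComm k A A B B).toLinearMap ∘ₗ
        TensorProduct.map δA δB) =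
      (lTensor (A ⊗[k] B) (TensorProduct.tensorTensorTensorComm k A A B B).toLinearMap ∘ₗ
        (TensorProduct.tensorTensorTensorComm k A (A ⊗[k] A) B (B ⊗[k] B)).toLinearMap) ∘ₗ
        (TensorProduct.map (lTensor A δA) (lTensor B δB) ∘ₗ TensorProduct.map δA δB) :=
    by rw [← LinearMap.comp_assoc, S2, LinearMap.comp_assoc]
  rw [L1, L2, ← TensorProduct.map_comp, ← TensorProduct.map_comp, ← LinearMap.comp_assoc,
    S3, LinearMap.comp_assoc, ← TensorProduct.map_comp, hA, hB]

end TensorCoalgebra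

section Convolution

variable {C M : Type*} [AddCommGroup C] [Module k C] [AddCommGroup M] [Module k M]

theorem convKM_counit (δ : C →ₗ[k] C ⊗[k] C) (εC : C →ₗ[k] k)
    (h : (TensorProduct.lid k C).toLinearMap ∘ₗ (rTensor C εC) ∘ₗ δ = LinearMap.id)
    (f : C →ₗ[k] M) : convKM k C M δ εC f = f := by
  have struct : (TensorProduct.lid k M).toLinearMap ∘ₗ TensorProduct.map εC f =
      f ∘ₗ ((TensorProduct.lid k C).toLinearMap ∘ₗ (rTensor C εC)) := by
    ext c₁ c₂
    simp
  rw [convKM, cct _ _ _ _ struct δ, LinearMap.comp_assoc, h, LinearMap.comp_id]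

theorem convMK_eq_convKM (δ : C →ₗ[k] C ⊗[k] C)
    (hc : (TensorProduct.comm k C C).toLinearMap ∘ₗ δ = δ)
    (f : C →ₗ[k] M) (g : C →ₗ[k] k) : convMK k C M δ f g = convKM k C M δ g f := by
  have struct : (TensorProduct.rid k M).toLinearMap ∘ₗ TensorProduct.map f g =
      ((TensorProduct.lid k M).toLinearMap ∘ₗ TensorProduct.map g f) ∘ₗ
        (TensorProduct.comm k C C).toLinearMap := by
    ext c₁ c₂
    simp
  rw [convMK, convKM, cct _ _ _ _ struct δ, hc, LinearMap.comp_assoc]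

theorem convKM_conv (δ : C →ₗ[k] C ⊗[k] C)
    (hco : (TensorProduct.assoc k C C C).toLinearMap ∘ₗ (rTensor C δ) ∘ₗ δ =
      (lTensor C δ) ∘ₗ δ)
    (g h : C →ₗ[k] k) (f : C →ₗ[k] M) :
    convKM k C M δ (conv k C δ g h) f = convKM k C M δ g (convKM k C M δ h f) := by
  have e1 : TensorProduct.map ((LinearMap.mul' k k) ∘ₗ (TensorProduct.map g h ∘ₗ δ)) f =
      (TensorProduct.map ((LinearMap.mul' k k) ∘ₗ TensorProduct.map g h) f) ∘ₗ
        rTensor C δ := by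
    ext c₁ c₂
    simp
  have e2 : TensorProduct.map g
        ((TensorProduct.lid k M).toLinearMap ∘ₗ (TensorProduct.map h f ∘ₗ δ)) =
      (TensorProduct.map g ((TensorProduct.lid k M).toLinearMap ∘ₗ TensorProduct.map h f)) ∘ₗ
        lTensor C δ := by
    ext c₁ c₂
    simp
  have struct : (TensorProduct.lid k M).toLinearMap ∘ₗ
        (TensorProduct.map g
          ((TensorProduct.lid k M).toLinearMap ∘ₗ TensorProduct.map h f) ∘ₗ
          (TensorProduct.assoc k C C C).toLinearMap) =
      (TensorProduct.lid k M).toLinearMap ∘ₗ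
        TensorProduct.map ((LinearMap.mul' k k) ∘ₗ TensorProduct.map g h) f := by
    ext c₁ c₂ c₃
    simp [mul_smul]
    rw [smul_comm]
  rw [convKM, convKM, convKM, conv, e1, e2]
  simp only [LinearMap.comp_assoc]
  rw [← hco, cct3 _ _ _ _ struct (rTensor C δ ∘ₗ δ)]
  simp only [LinearMap.comp_assoc]

end Convolution

end DQBAux

open DQB TensorProduct LinearMap in
/-- A cocommutative dual quasi-bialgebra with a preantipode has an
associative multiplication, hence is an ordinary bialgebra. -/
theorem cocommutative_assoc (k : Type*) [Field k] (H : Type*) [AddCommGroup H] [Module k H]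
    (Δ : H →ₗ[k] H ⊗[k] H) (ε : H →ₗ[k] k) (μ : H ⊗[k] H →ₗ[k] H) (e : H)
    (ω ωInv : H ⊗[k] (H ⊗[k] H) →ₗ[k] k) (S : H →ₗ[k] H)
    (hH : IsDualQuasiBialgebra k H Δ ε μ e ω ωInv)
    (hS : IsPreantipode k H Δ ε μ e ω S)
    (hcoc : (TensorProduct.comm k H H).toLinearMap ∘ₗ Δ = Δ) :
    μ ∘ₗ rTensor H μ = μ ∘ₗ lTensor H μ ∘ₗ (TensorProduct.assoc k H H H).toLinearMap := by
  have e2 : comulT k H Δ = DQBAux.delT Δ Δ := rfl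
  have e3 : comul3 k H Δ = DQBAux.delT Δ (DQBAux.delT Δ Δ) := rfl
  have hco2 : (TensorProduct.assoc k (H ⊗[k] H) (H ⊗[k] H) (H ⊗[k] H)).toLinearMap ∘ₗ
      (rTensor (H ⊗[k] H) (DQBAux.delT Δ Δ)) ∘ₗ DQBAux.delT Δ Δ =
      (lTensor (H ⊗[k] H) (DQBAux.delT Δ Δ)) ∘ₗ DQBAux.delT Δ Δ :=
    DQBAux.delT_coassoc Δ Δ hH.coassoc hH.coassoc
  have hco3 := DQBAux.delT_coassoc Δ (DQBAux.delT Δ Δ) hH.coassoc hco2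
  have hcu2 : (TensorProduct.lid k (H ⊗[k] H)).toLinearMap ∘ₗ
      (rTensor (H ⊗[k] H) ((LinearMap.mul' k k) ∘ₗ TensorProduct.map ε ε)) ∘ₗ
        DQBAux.delT Δ Δ = LinearMap.id :=
    DQBAux.delT_counit Δ Δ ε ε hH.counit_comul hH.counit_comul
  have hcu3 := DQBAux.delT_counit Δ (DQBAux.delT Δ Δ) ε ((LinearMap.mul' k k) ∘ₗ TensorProduct.map ε ε)
    hH.counit_comul hcu2
  have hcc2 := DQBAux.delT_cocomm Δ Δ hcoc hcoc
  have hcc3 := DQBAux.delT_cocomm Δ (DQBAux.delT Δ Δ) hcoc hcc2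
  have hcu3' : (TensorProduct.lid k (H ⊗[k] (H ⊗[k] H))).toLinearMap ∘ₗ
      (rTensor (H ⊗[k] (H ⊗[k] H)) (counit3 k H ε)) ∘ₗ comul3 k H Δ = LinearMap.id := hcu3
  have hco3' : (TensorProduct.assoc k (H ⊗[k] (H ⊗[k] H)) (H ⊗[k] (H ⊗[k] H))
        (H ⊗[k] (H ⊗[k] H))).toLinearMap ∘ₗ
      (rTensor (H ⊗[k] (H ⊗[k] H)) (comul3 k H Δ)) ∘ₗ comul3 k H Δ =
      (lTensor (H ⊗[k] (H ⊗[k] H)) (comul3 k H Δ)) ∘ₗ comul3 k H Δ := hco3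
  have hcc3' : (TensorProduct.comm k (H ⊗[k] (H ⊗[k] H)) (H ⊗[k] (H ⊗[k] H))).toLinearMap ∘ₗ
      comul3 k H Δ = comul3 k H Δ := hcc3
  have key : μ ∘ₗ lTensor H μ =
      μ ∘ₗ rTensor H μ ∘ₗ (TensorProduct.assoc k H H H).symm.toLinearMap := by
    calc μ ∘ₗ lTensor H μ
        = convKM k (H ⊗[k] (H ⊗[k] H)) H (comul3 k H Δ) (counit3 k H ε) (μ ∘ₗ lTensor H μ) :=
          (DQBAux.convKM_counit (comul3 k H Δ) (counit3 k H ε) hcu3' (μ ∘ₗ lTensor H μ)).symm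
      _ = convKM k (H ⊗[k] (H ⊗[k] H)) H (comul3 k H Δ)
            (conv k (H ⊗[k] (H ⊗[k] H)) (comul3 k H Δ) ωInv ω) (μ ∘ₗ lTensor H μ) := by
          rw [hH.omega_invR]
      _ = convKM k (H ⊗[k] (H ⊗[k] H)) H (comul3 k H Δ) ωInv
            (convKM k (H ⊗[k] (H ⊗[k] H)) H (comul3 k H Δ) ω (μ ∘ₗ lTensor H μ)) :=
          DQBAux.convKM_conv (comul3 k H Δ) hco3' ωInv ω (μ ∘ₗ lTensor H μ)
      _ = convKM k (H ⊗[k] (H ⊗[k] H)) H (comul3 k H Δ) ωInv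
            (convMK k (H ⊗[k] (H ⊗[k] H)) H (comul3 k H Δ) (μ ∘ₗ lTensor H μ) ω) := by
          rw [DQBAux.convMK_eq_convKM (comul3 k H Δ) hcc3' (μ ∘ₗ lTensor H μ) ω]
      _ = convKM k (H ⊗[k] (H ⊗[k] H)) H (comul3 k H Δ) ωInv
            (convKM k (H ⊗[k] (H ⊗[k] H)) H (comul3 k H Δ) ω
              (μ ∘ₗ rTensor H μ ∘ₗ (TensorProduct.assoc k H H H).symm.toLinearMap)) := by
          rw [hH.quasi_assoc]
      _ = convKM k (H ⊗[k] (H ⊗[k] H)) H (comul3 k H Δ)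
            (conv k (H ⊗[k] (H ⊗[k] H)) (comul3 k H Δ) ωInv ω)
            (μ ∘ₗ rTensor H μ ∘ₗ (TensorProduct.assoc k H H H).symm.toLinearMap) :=
          (DQBAux.convKM_conv (comul3 k H Δ) hco3' ωInv ω _).symm
      _ = convKM k (H ⊗[k] (H ⊗[k] H)) H (comul3 k H Δ) (counit3 k H ε)
            (μ ∘ₗ rTensor H μ ∘ₗ (TensorProduct.assoc k H H H).symm.toLinearMap) := by
          rw [hH.omega_invR]
      _ = μ ∘ₗ rTensor H μ ∘ₗ (TensorProduct.assoc k H H H).symm.toLinearMap :=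
          DQBAux.convKM_counit (comul3 k H Δ) (counit3 k H ε) hcu3' _
  ext a b c
  have h := LinearMap.congr_fun key (a ⊗ₜ[k] (b ⊗ₜ[k] c))
  simp only [LinearMap.comp_apply, lTensor_tmul, rTensor_tmul,
    TensorProduct.assoc_symm_tmul, LinearEquiv.coe_coe, TensorProduct.assoc_tmul,
    TensorProduct.AlgebraTensorModule.curry_apply, TensorProduct.curry_apply,
    LinearMap.coe_restrictScalars] at h ⊢
  exact h.symm
end
end

section
/- Let (H, m, u, Δ, ε, ω, S) be a cocommutative dual quasi-bialgebra with a preantipode S. Define s: H → H by s(h) := S(h₃)₁ ω(h₁ ⊗ S(h₃)₂ ⊗ h₂). Then (H, m, u, Δ, ε, s) is an ordinary Hopf algebra, i.e., s(h₁)h₂ = ε(h)1_H = h₁s(h₂) for all h ∈ H. -/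
open TensorProduct LinearMap

noncomputable section

namespace DQB

variable (k : Type*) [CommRing k] (H : Type*) [AddCommGroup H] [Module k H]

open TensorProduct LinearMap in
/-- The map `s(h) := S(h₃)₁ ω(h₁ ⊗ S(h₃)₂ ⊗ h₂)` built from a preantipode `S`. -/
def sAntipode (Δ : H →ₗ[k] H ⊗[k] H) (ω : H ⊗[k] (H ⊗[k] H) →ₗ[k] k)
    (S : H →ₗ[k] H) : H →ₗ[k] H :=
  (TensorProduct.rid k H).toLinearMap
    ∘ₗ lTensor H ω
    ∘ₗ lTensor H (exch' k H H H)
    ∘ₗ (TensorProduct.assoc k H H (H ⊗[k] H)).toLinearMap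
    ∘ₗ (TensorProduct.comm k (H ⊗[k] H) (H ⊗[k] H)).toLinearMap
    ∘ₗ lTensor (H ⊗[k] H) (Δ ∘ₗ S)
    ∘ₗ rTensor H Δ
    ∘ₗ Δ

end DQB


namespace DQBAux
open DQB TensorProduct LinearMap

set_option maxRecDepth 10000
set_option maxHeartbeats 1600000

variable {k : Type*} [CommRing k] {H : Type*} [AddCommGroup H] [Module k H]

/-- tail of `sAntipode` with generic inner map `f`. -/
noncomputable def kap (ω : H ⊗[k] (H ⊗[k] H) →ₗ[k] k) (f : H →ₗ[k] H ⊗[k] H) :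
    (H ⊗[k] H) ⊗[k] H →ₗ[k] H :=
  (TensorProduct.rid k H).toLinearMap
    ∘ₗ lTensor H ω
    ∘ₗ lTensor H (exch' k H H H)
    ∘ₗ (TensorProduct.assoc k H H (H ⊗[k] H)).toLinearMap
    ∘ₗ (TensorProduct.comm k (H ⊗[k] H) (H ⊗[k] H)).toLinearMap
    ∘ₗ lTensor (H ⊗[k] H) f

/-- `a ⊗ (b ⊗ (u ⊗ w)) ↦ ω (a ⊗ (u ⊗ b)) • w`. -/
noncomputable def rho (ω : H ⊗[k] (H ⊗[k] H) →ₗ[k] k) :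
    H ⊗[k] (H ⊗[k] (H ⊗[k] H)) →ₗ[k] H :=
  (TensorProduct.lid k H).toLinearMap
    ∘ₗ rTensor H ω
    ∘ₗ (TensorProduct.assoc k H (H ⊗[k] H) H).symm.toLinearMap
    ∘ₗ lTensor H (rTensor H (TensorProduct.comm k H H).toLinearMap
        ∘ₗ (TensorProduct.assoc k H H H).symm.toLinearMap)

lemma glue1 : exch' k H H H ∘ₗ (TensorProduct.assoc k H H H).toLinearMap
    = (TensorProduct.assoc k H H H).toLinearMap
      ∘ₗ rTensor H (TensorProduct.comm k H H).toLinearMap := by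
  ext a b c
  simp [exch']

lemma comm_mk (e : H) : (TensorProduct.comm k H H).toLinearMap ∘ₗ TensorProduct.mk k H H e
    = (TensorProduct.mk k H H).flip e := by
  ext x; simp

lemma nat_exch' (f : H →ₗ[k] H ⊗[k] H) :
    exch' k H H (H ⊗[k] H) ∘ₗ lTensor H (lTensor H f)
      = lTensor H (lTensor H f) ∘ₗ exch' k H H H := by
  ext a b c
  simp [exch']

lemma nat_comm (f : H →ₗ[k] H ⊗[k] (H ⊗[k] H)) :
    (TensorProduct.comm k H (H ⊗[k] (H ⊗[k] H))).toLinearMap ∘ₗ lTensor H f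
      = rTensor H f ∘ₗ (TensorProduct.comm k H H).toLinearMap := by
  ext a b; simp

lemma lT2_comp {P Q R : Type*} [AddCommGroup P] [Module k P] [AddCommGroup Q] [Module k Q]
    [AddCommGroup R] [Module k R] (f : Q →ₗ[k] R) (g : P →ₗ[k] Q) :
    lTensor H (lTensor H f) ∘ₗ lTensor H (lTensor H g)
      = lTensor H (lTensor H (f ∘ₗ g)) := by
  rw [← lTensor_comp, ← lTensor_comp]

lemma key2 (μ : H ⊗[k] H →ₗ[k] H) (ω : H ⊗[k] (H ⊗[k] H) →ₗ[k] k) (g : H →ₗ[k] H ⊗[k] H) :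
    μ ∘ₗ lTensor H (kap ω ((TensorProduct.comm k H H).toLinearMap ∘ₗ g)
        ∘ₗ (TensorProduct.assoc k H H H).symm.toLinearMap)
      ∘ₗ exch' k H H (H ⊗[k] H) ∘ₗ lTensor H (exch' k H H H)
    = DQBAux.rho ω ∘ₗ lTensor H (lTensor H (lTensor H μ))
        ∘ₗ lTensor H (lTensor H (exch' k H H H ∘ₗ lTensor H g)) := by
  ext a b c d
  simp only [AlgebraTensorModule.curry_apply, TensorProduct.curry_apply,
    LinearMap.coe_restrictScalars, comp_apply, lTensor_tmul, exch, exch', kap, rho,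
    LinearEquiv.coe_coe, TensorProduct.assoc_tmul, TensorProduct.assoc_symm_tmul,
    TensorProduct.comm_tmul, rTensor_tmul, TensorProduct.lid_tmul, TensorProduct.rid_tmul]
  generalize g d = t
  induction t using TensorProduct.induction_on with
  | zero => simp
  | tmul u v =>
    simp [AlgebraTensorModule.curry_apply, TensorProduct.curry_apply,
      LinearMap.coe_restrictScalars, comp_apply, lTensor_tmul, exch, exch', kap, rho,
      LinearEquiv.coe_coe, TensorProduct.assoc_tmul, TensorProduct.assoc_symm_tmul,
      TensorProduct.comm_tmul, rTensor_tmul, TensorProduct.lid_tmul, TensorProduct.rid_tmul,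
      TensorProduct.tmul_smul, ← TensorProduct.smul_tmul', map_smul]
  | add x y hx hy =>
    simp only [map_add, TensorProduct.tmul_add, TensorProduct.add_tmul]
    rw [hx, hy]

lemma key1 (μ : H ⊗[k] H →ₗ[k] H) (ω : H ⊗[k] (H ⊗[k] H) →ₗ[k] k) (g : H →ₗ[k] H ⊗[k] H) :
    μ ∘ₗ rTensor H (kap ω g ∘ₗ (TensorProduct.assoc k H H H).symm.toLinearMap)
      ∘ₗ (TensorProduct.comm k H (H ⊗[k] (H ⊗[k] H))).toLinearMap
      ∘ₗ exch' k H H (H ⊗[k] H) ∘ₗ lTensor H (exch' k H H H)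
    = DQBAux.rho ω ∘ₗ lTensor H (lTensor H ((TensorProduct.comm k H H).toLinearMap ∘ₗ rTensor H μ))
        ∘ₗ lTensor H (lTensor H (exch k H H H ∘ₗ rTensor H g
            ∘ₗ (TensorProduct.comm k H H).toLinearMap)) := by
  ext a b c d
  simp only [AlgebraTensorModule.curry_apply, TensorProduct.curry_apply,
    LinearMap.coe_restrictScalars, comp_apply, lTensor_tmul, exch, exch', kap, rho,
    LinearEquiv.coe_coe, TensorProduct.assoc_tmul, TensorProduct.assoc_symm_tmul,
    TensorProduct.comm_tmul, rTensor_tmul, TensorProduct.lid_tmul, TensorProduct.rid_tmul]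
  generalize g d = t
  induction t using TensorProduct.induction_on with
  | zero => simp
  | tmul u v =>
    simp [AlgebraTensorModule.curry_apply, TensorProduct.curry_apply,
      LinearMap.coe_restrictScalars, comp_apply, lTensor_tmul, exch, exch', kap, rho,
      LinearEquiv.coe_coe, TensorProduct.assoc_tmul, TensorProduct.assoc_symm_tmul,
      TensorProduct.comm_tmul, rTensor_tmul, TensorProduct.lid_tmul, TensorProduct.rid_tmul,
      TensorProduct.tmul_smul, ← TensorProduct.smul_tmul', map_smul]
  | add x y hx hy =>
    simp only [map_add, TensorProduct.tmul_add, TensorProduct.add_tmul]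
    rw [hx, hy]

lemma final (ω : H ⊗[k] (H ⊗[k] H) →ₗ[k] k) (S : H →ₗ[k] H) (e : H) :
    DQBAux.rho ω ∘ₗ lTensor H (lTensor H ((TensorProduct.mk k H H).flip e ∘ₗ S))
    = toSpanSingleton k H e
        ∘ₗ (ω ∘ₗ lTensor H (rTensor H S ∘ₗ (TensorProduct.comm k H H).toLinearMap)) := by
  ext a b c
  simp [rho]

end DQBAux

open DQB TensorProduct LinearMap in
/-- If `(H, ω, S)` is a cocommutative dual quasi-bialgebra with a
preantipode, then `s(h) := S(h₃)₁ ω(h₁ ⊗ S(h₃)₂ ⊗ h₂)` is an antipode for the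
ordinary bialgebra `(H, μ, e, Δ, ε)`: `s(h₁)h₂ = ε(h) • 1_H = h₁ s(h₂)`. -/
theorem cocommutative_hopf (k : Type*) [Field k] (H : Type*) [AddCommGroup H] [Module k H]
    (Δ : H →ₗ[k] H ⊗[k] H) (ε : H →ₗ[k] k) (μ : H ⊗[k] H →ₗ[k] H) (e : H)
    (ω ωInv : H ⊗[k] (H ⊗[k] H) →ₗ[k] k) (S : H →ₗ[k] H)
    (hH : IsDualQuasiBialgebra k H Δ ε μ e ω ωInv)
    (hS : IsPreantipode k H Δ ε μ e ω S)
    (hcoc : (TensorProduct.comm k H H).toLinearMap ∘ₗ Δ = Δ) :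
    μ ∘ₗ rTensor H (sAntipode k H Δ ω S) ∘ₗ Δ = LinearMap.toSpanSingleton k H e ∘ₗ ε ∧
    μ ∘ₗ lTensor H (sAntipode k H Δ ω S) ∘ₗ Δ = LinearMap.toSpanSingleton k H e ∘ₗ ε := by
    classical
  -- abbreviations via `have` equalities
  have hc2 : comul2 k H Δ = lTensor H Δ ∘ₗ Δ := rfl
  -- coassociativity in symmetric form
  have h1 : rTensor H Δ ∘ₗ Δ
      = (TensorProduct.assoc k H H H).symm.toLinearMap ∘ₗ comul2 k H Δ := by
    ext x
    have h := LinearMap.congr_fun hH.coassoc x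
    simp only [comul2, comp_apply, LinearEquiv.coe_coe] at h ⊢
    rw [← h, LinearEquiv.symm_apply_apply]
  have h2 : comul2 k H Δ
      = (TensorProduct.assoc k H H H).toLinearMap ∘ₗ rTensor H Δ ∘ₗ Δ := hH.coassoc.symm
  -- cocommutativity: swapping the last two legs of `comul2` is harmless
  have hA : exch' k H H H ∘ₗ comul2 k H Δ = comul2 k H Δ := by
    calc exch' k H H H ∘ₗ comul2 k H Δ
        = exch' k H H H ∘ₗ (TensorProduct.assoc k H H H).toLinearMap
            ∘ₗ rTensor H Δ ∘ₗ Δ := by rw [← h2]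
      _ = (exch' k H H H ∘ₗ (TensorProduct.assoc k H H H).toLinearMap)
            ∘ₗ rTensor H Δ ∘ₗ Δ := rfl
      _ = ((TensorProduct.assoc k H H H).toLinearMap
            ∘ₗ rTensor H (TensorProduct.comm k H H).toLinearMap) ∘ₗ rTensor H Δ ∘ₗ Δ := by
          rw [DQBAux.glue1]
      _ = (TensorProduct.assoc k H H H).toLinearMap
            ∘ₗ (rTensor H (TensorProduct.comm k H H).toLinearMap ∘ₗ rTensor H Δ) ∘ₗ Δ := rfl
      _ = (TensorProduct.assoc k H H H).toLinearMap
            ∘ₗ rTensor H ((TensorProduct.comm k H H).toLinearMap ∘ₗ Δ) ∘ₗ Δ := by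
          rw [← rTensor_comp]
      _ = (TensorProduct.assoc k H H H).toLinearMap ∘ₗ rTensor H Δ ∘ₗ Δ := by rw [hcoc]
      _ = comul2 k H Δ := h2.symm
  have hB : lTensor H (TensorProduct.comm k H H).toLinearMap ∘ₗ comul2 k H Δ
      = comul2 k H Δ := by
    calc lTensor H (TensorProduct.comm k H H).toLinearMap ∘ₗ comul2 k H Δ
        = (lTensor H (TensorProduct.comm k H H).toLinearMap ∘ₗ lTensor H Δ) ∘ₗ Δ := rfl
      _ = lTensor H ((TensorProduct.comm k H H).toLinearMap ∘ₗ Δ) ∘ₗ Δ := by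
          rw [← lTensor_comp]
      _ = lTensor H Δ ∘ₗ Δ := by rw [hcoc]
      _ = comul2 k H Δ := hc2.symm
  have hD3' : lTensor H (comul2 k H Δ) ∘ₗ Δ
      = lTensor H (lTensor H Δ) ∘ₗ comul2 k H Δ := by
    calc lTensor H (comul2 k H Δ) ∘ₗ Δ
        = lTensor H (lTensor H Δ ∘ₗ Δ) ∘ₗ Δ := by rw [← hc2]
      _ = (lTensor H (lTensor H Δ) ∘ₗ lTensor H Δ) ∘ₗ Δ := by rw [lTensor_comp]
      _ = lTensor H (lTensor H Δ) ∘ₗ (lTensor H Δ ∘ₗ Δ) := rfl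
      _ = lTensor H (lTensor H Δ) ∘ₗ comul2 k H Δ := by rw [← hc2]
  have hC3 : lTensor H (exch' k H H H) ∘ₗ (lTensor H (comul2 k H Δ) ∘ₗ Δ)
      = lTensor H (comul2 k H Δ) ∘ₗ Δ := by
    calc lTensor H (exch' k H H H) ∘ₗ (lTensor H (comul2 k H Δ) ∘ₗ Δ)
        = (lTensor H (exch' k H H H) ∘ₗ lTensor H (comul2 k H Δ)) ∘ₗ Δ := rfl
      _ = lTensor H (exch' k H H H ∘ₗ comul2 k H Δ) ∘ₗ Δ := by rw [← lTensor_comp]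
      _ = lTensor H (comul2 k H Δ) ∘ₗ Δ := by rw [hA]
  have hDfix : exch' k H H (H ⊗[k] H) ∘ₗ (lTensor H (comul2 k H Δ) ∘ₗ Δ)
      = lTensor H (comul2 k H Δ) ∘ₗ Δ := by
    calc exch' k H H (H ⊗[k] H) ∘ₗ (lTensor H (comul2 k H Δ) ∘ₗ Δ)
        = exch' k H H (H ⊗[k] H) ∘ₗ (lTensor H (lTensor H Δ) ∘ₗ comul2 k H Δ) := by
          rw [hD3']
      _ = (exch' k H H (H ⊗[k] H) ∘ₗ lTensor H (lTensor H Δ)) ∘ₗ comul2 k H Δ := rfl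
      _ = (lTensor H (lTensor H Δ) ∘ₗ exch' k H H H) ∘ₗ comul2 k H Δ := by
          rw [DQBAux.nat_exch']
      _ = lTensor H (lTensor H Δ) ∘ₗ (exch' k H H H ∘ₗ comul2 k H Δ) := rfl
      _ = lTensor H (lTensor H Δ) ∘ₗ comul2 k H Δ := by rw [hA]
      _ = lTensor H (comul2 k H Δ) ∘ₗ Δ := hD3'.symm
  have hfix2 : exch' k H H (H ⊗[k] H) ∘ₗ (lTensor H (exch' k H H H)
        ∘ₗ (lTensor H (comul2 k H Δ) ∘ₗ Δ))
      = lTensor H (comul2 k H Δ) ∘ₗ Δ := by rw [hC3, hDfix]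
  -- the antipode candidate, re-expressed
  have hs : sAntipode k H Δ ω S
      = DQBAux.kap ω (Δ ∘ₗ S)
          ∘ₗ ((TensorProduct.assoc k H H H).symm.toLinearMap ∘ₗ comul2 k H Δ) := by
    rw [← h1]; rfl
  have hCg : (TensorProduct.comm k H H).toLinearMap ∘ₗ (Δ ∘ₗ S) = Δ ∘ₗ S := by
    calc (TensorProduct.comm k H H).toLinearMap ∘ₗ (Δ ∘ₗ S)
        = ((TensorProduct.comm k H H).toLinearMap ∘ₗ Δ) ∘ₗ S := rfl
      _ = Δ ∘ₗ S := by rw [hcoc]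
  -- final common step
  have hfin : toSpanSingleton k H e
        ∘ₗ ((ω ∘ₗ lTensor H (rTensor H S ∘ₗ (TensorProduct.comm k H H).toLinearMap))
            ∘ₗ comul2 k H Δ)
      = toSpanSingleton k H e ∘ₗ ε := by
    congr 1
    calc (ω ∘ₗ lTensor H (rTensor H S ∘ₗ (TensorProduct.comm k H H).toLinearMap))
          ∘ₗ comul2 k H Δ
        = ω ∘ₗ ((lTensor H (rTensor H S)
            ∘ₗ lTensor H (TensorProduct.comm k H H).toLinearMap) ∘ₗ comul2 k H Δ) := by
          rw [lTensor_comp]; rfl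
      _ = ω ∘ₗ (lTensor H (rTensor H S)
            ∘ₗ (lTensor H (TensorProduct.comm k H H).toLinearMap ∘ₗ comul2 k H Δ)) := rfl
      _ = ω ∘ₗ lTensor H (rTensor H S) ∘ₗ comul2 k H Δ := by rw [hB]
      _ = ε := hS.cond3
  constructor
  · -- goal 1 : `s(h₁) h₂ = ε(h) 1`
    have key1' := DQBAux.key1 μ ω (Δ ∘ₗ S)
    have hrc : rTensor H (comul2 k H Δ) ∘ₗ Δ
        = (TensorProduct.comm k H (H ⊗[k] (H ⊗[k] H))).toLinearMap
            ∘ₗ (lTensor H (comul2 k H Δ) ∘ₗ Δ) := by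
      calc rTensor H (comul2 k H Δ) ∘ₗ Δ
          = rTensor H (comul2 k H Δ)
              ∘ₗ ((TensorProduct.comm k H H).toLinearMap ∘ₗ Δ) := by rw [hcoc]
        _ = (rTensor H (comul2 k H Δ) ∘ₗ (TensorProduct.comm k H H).toLinearMap) ∘ₗ Δ := rfl
        _ = ((TensorProduct.comm k H (H ⊗[k] (H ⊗[k] H))).toLinearMap
              ∘ₗ lTensor H (comul2 k H Δ)) ∘ₗ Δ := by rw [← DQBAux.nat_comm]
        _ = (TensorProduct.comm k H (H ⊗[k] (H ⊗[k] H))).toLinearMap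
              ∘ₗ (lTensor H (comul2 k H Δ) ∘ₗ Δ) := rfl
    have hinner : ((TensorProduct.comm k H H).toLinearMap ∘ₗ rTensor H μ)
          ∘ₗ ((exch k H H H ∘ₗ rTensor H (Δ ∘ₗ S)
              ∘ₗ (TensorProduct.comm k H H).toLinearMap) ∘ₗ Δ)
        = (TensorProduct.mk k H H).flip e ∘ₗ S := by
      have t1 : (exch k H H H ∘ₗ rTensor H (Δ ∘ₗ S)
            ∘ₗ (TensorProduct.comm k H H).toLinearMap) ∘ₗ Δ
          = exch k H H H ∘ₗ rTensor H (Δ ∘ₗ S) ∘ₗ Δ := by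
        calc (exch k H H H ∘ₗ rTensor H (Δ ∘ₗ S)
              ∘ₗ (TensorProduct.comm k H H).toLinearMap) ∘ₗ Δ
            = exch k H H H ∘ₗ rTensor H (Δ ∘ₗ S)
                ∘ₗ ((TensorProduct.comm k H H).toLinearMap ∘ₗ Δ) := rfl
          _ = exch k H H H ∘ₗ rTensor H (Δ ∘ₗ S) ∘ₗ Δ := by rw [hcoc]
      calc ((TensorProduct.comm k H H).toLinearMap ∘ₗ rTensor H μ)
            ∘ₗ ((exch k H H H ∘ₗ rTensor H (Δ ∘ₗ S)
                ∘ₗ (TensorProduct.comm k H H).toLinearMap) ∘ₗ Δ)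
          = ((TensorProduct.comm k H H).toLinearMap ∘ₗ rTensor H μ)
              ∘ₗ (exch k H H H ∘ₗ rTensor H (Δ ∘ₗ S) ∘ₗ Δ) := by rw [t1]
        _ = (TensorProduct.comm k H H).toLinearMap
              ∘ₗ (rTensor H μ ∘ₗ exch k H H H ∘ₗ rTensor H (Δ ∘ₗ S) ∘ₗ Δ) := rfl
        _ = (TensorProduct.comm k H H).toLinearMap
              ∘ₗ (TensorProduct.mk k H H e ∘ₗ S) := by rw [hS.cond1]
        _ = ((TensorProduct.comm k H H).toLinearMap ∘ₗ TensorProduct.mk k H H e) ∘ₗ S := rfl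
        _ = (TensorProduct.mk k H H).flip e ∘ₗ S := by rw [DQBAux.comm_mk]
    calc μ ∘ₗ rTensor H (sAntipode k H Δ ω S) ∘ₗ Δ
        = μ ∘ₗ rTensor H (DQBAux.kap ω (Δ ∘ₗ S)
            ∘ₗ ((TensorProduct.assoc k H H H).symm.toLinearMap ∘ₗ comul2 k H Δ)) ∘ₗ Δ := by
          rw [hs]
      _ = μ ∘ₗ (rTensor H (DQBAux.kap ω (Δ ∘ₗ S)
            ∘ₗ (TensorProduct.assoc k H H H).symm.toLinearMap)
            ∘ₗ rTensor H (comul2 k H Δ)) ∘ₗ Δ := by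
          rw [show DQBAux.kap ω (Δ ∘ₗ S)
              ∘ₗ ((TensorProduct.assoc k H H H).symm.toLinearMap ∘ₗ comul2 k H Δ)
            = (DQBAux.kap ω (Δ ∘ₗ S) ∘ₗ (TensorProduct.assoc k H H H).symm.toLinearMap)
              ∘ₗ comul2 k H Δ from rfl, rTensor_comp]
      _ = μ ∘ₗ rTensor H (DQBAux.kap ω (Δ ∘ₗ S)
            ∘ₗ (TensorProduct.assoc k H H H).symm.toLinearMap)
            ∘ₗ (rTensor H (comul2 k H Δ) ∘ₗ Δ) := rfl
      _ = μ ∘ₗ rTensor H (DQBAux.kap ω (Δ ∘ₗ S)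
            ∘ₗ (TensorProduct.assoc k H H H).symm.toLinearMap)
            ∘ₗ ((TensorProduct.comm k H (H ⊗[k] (H ⊗[k] H))).toLinearMap
              ∘ₗ (lTensor H (comul2 k H Δ) ∘ₗ Δ)) := by rw [hrc]
      _ = μ ∘ₗ rTensor H (DQBAux.kap ω (Δ ∘ₗ S)
            ∘ₗ (TensorProduct.assoc k H H H).symm.toLinearMap)
            ∘ₗ ((TensorProduct.comm k H (H ⊗[k] (H ⊗[k] H))).toLinearMap
              ∘ₗ (exch' k H H (H ⊗[k] H) ∘ₗ (lTensor H (exch' k H H H)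
                ∘ₗ (lTensor H (comul2 k H Δ) ∘ₗ Δ)))) := by rw [hfix2]
      _ = (μ ∘ₗ rTensor H (DQBAux.kap ω (Δ ∘ₗ S)
            ∘ₗ (TensorProduct.assoc k H H H).symm.toLinearMap)
            ∘ₗ (TensorProduct.comm k H (H ⊗[k] (H ⊗[k] H))).toLinearMap
            ∘ₗ exch' k H H (H ⊗[k] H) ∘ₗ lTensor H (exch' k H H H))
            ∘ₗ (lTensor H (comul2 k H Δ) ∘ₗ Δ) := rfl
      _ = (DQBAux.rho ω ∘ₗ lTensor H (lTensor H ((TensorProduct.comm k H H).toLinearMap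
              ∘ₗ rTensor H μ))
            ∘ₗ lTensor H (lTensor H (exch k H H H ∘ₗ rTensor H (Δ ∘ₗ S)
              ∘ₗ (TensorProduct.comm k H H).toLinearMap)))
            ∘ₗ (lTensor H (comul2 k H Δ) ∘ₗ Δ) := by rw [key1']
      _ = (DQBAux.rho ω ∘ₗ lTensor H (lTensor H ((TensorProduct.comm k H H).toLinearMap
              ∘ₗ rTensor H μ))
            ∘ₗ lTensor H (lTensor H (exch k H H H ∘ₗ rTensor H (Δ ∘ₗ S)
              ∘ₗ (TensorProduct.comm k H H).toLinearMap)))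
            ∘ₗ (lTensor H (lTensor H Δ) ∘ₗ comul2 k H Δ) := by rw [hD3']
      _ = DQBAux.rho ω ∘ₗ ((lTensor H (lTensor H ((TensorProduct.comm k H H).toLinearMap
              ∘ₗ rTensor H μ))
            ∘ₗ lTensor H (lTensor H (exch k H H H ∘ₗ rTensor H (Δ ∘ₗ S)
              ∘ₗ (TensorProduct.comm k H H).toLinearMap)))
            ∘ₗ lTensor H (lTensor H Δ)) ∘ₗ comul2 k H Δ := rfl
      _ = DQBAux.rho ω ∘ₗ (lTensor H (lTensor H (((TensorProduct.comm k H H).toLinearMap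
              ∘ₗ rTensor H μ)
            ∘ₗ (exch k H H H ∘ₗ rTensor H (Δ ∘ₗ S)
              ∘ₗ (TensorProduct.comm k H H).toLinearMap)))
            ∘ₗ lTensor H (lTensor H Δ)) ∘ₗ comul2 k H Δ := by rw [DQBAux.lT2_comp]
      _ = DQBAux.rho ω ∘ₗ lTensor H (lTensor H ((((TensorProduct.comm k H H).toLinearMap
              ∘ₗ rTensor H μ)
            ∘ₗ (exch k H H H ∘ₗ rTensor H (Δ ∘ₗ S)
              ∘ₗ (TensorProduct.comm k H H).toLinearMap)) ∘ₗ Δ)) ∘ₗ comul2 k H Δ := by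
          rw [DQBAux.lT2_comp]
      _ = DQBAux.rho ω ∘ₗ lTensor H (lTensor H (((TensorProduct.comm k H H).toLinearMap
              ∘ₗ rTensor H μ)
            ∘ₗ ((exch k H H H ∘ₗ rTensor H (Δ ∘ₗ S)
              ∘ₗ (TensorProduct.comm k H H).toLinearMap) ∘ₗ Δ))) ∘ₗ comul2 k H Δ := rfl
      _ = DQBAux.rho ω ∘ₗ lTensor H (lTensor H ((TensorProduct.mk k H H).flip e ∘ₗ S))
            ∘ₗ comul2 k H Δ := by rw [hinner]
      _ = (DQBAux.rho ω ∘ₗ lTensor H (lTensor H ((TensorProduct.mk k H H).flip e ∘ₗ S)))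
            ∘ₗ comul2 k H Δ := rfl
      _ = (toSpanSingleton k H e
            ∘ₗ (ω ∘ₗ lTensor H (rTensor H S ∘ₗ (TensorProduct.comm k H H).toLinearMap)))
            ∘ₗ comul2 k H Δ := by rw [DQBAux.final]
      _ = toSpanSingleton k H e
            ∘ₗ ((ω ∘ₗ lTensor H (rTensor H S ∘ₗ (TensorProduct.comm k H H).toLinearMap))
              ∘ₗ comul2 k H Δ) := rfl
      _ = toSpanSingleton k H e ∘ₗ ε := hfin
  · -- goal 2 : `h₁ s(h₂) = ε(h) 1`
    have key2' := DQBAux.key2 μ ω (Δ ∘ₗ S)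
    rw [hCg] at key2'
    have c2' : lTensor H μ ∘ₗ ((exch' k H H H ∘ₗ lTensor H (Δ ∘ₗ S)) ∘ₗ Δ)
        = (TensorProduct.mk k H H).flip e ∘ₗ S := hS.cond2
    calc μ ∘ₗ lTensor H (sAntipode k H Δ ω S) ∘ₗ Δ
        = μ ∘ₗ lTensor H (DQBAux.kap ω (Δ ∘ₗ S)
            ∘ₗ ((TensorProduct.assoc k H H H).symm.toLinearMap ∘ₗ comul2 k H Δ)) ∘ₗ Δ := by
          rw [hs]
      _ = μ ∘ₗ (lTensor H (DQBAux.kap ω (Δ ∘ₗ S)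
            ∘ₗ (TensorProduct.assoc k H H H).symm.toLinearMap)
            ∘ₗ lTensor H (comul2 k H Δ)) ∘ₗ Δ := by
          rw [show DQBAux.kap ω (Δ ∘ₗ S)
              ∘ₗ ((TensorProduct.assoc k H H H).symm.toLinearMap ∘ₗ comul2 k H Δ)
            = (DQBAux.kap ω (Δ ∘ₗ S) ∘ₗ (TensorProduct.assoc k H H H).symm.toLinearMap)
              ∘ₗ comul2 k H Δ from rfl, lTensor_comp]
      _ = μ ∘ₗ lTensor H (DQBAux.kap ω (Δ ∘ₗ S)
            ∘ₗ (TensorProduct.assoc k H H H).symm.toLinearMap)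
            ∘ₗ (lTensor H (comul2 k H Δ) ∘ₗ Δ) := rfl
      _ = μ ∘ₗ lTensor H (DQBAux.kap ω (Δ ∘ₗ S)
            ∘ₗ (TensorProduct.assoc k H H H).symm.toLinearMap)
            ∘ₗ (exch' k H H (H ⊗[k] H) ∘ₗ (lTensor H (exch' k H H H)
              ∘ₗ (lTensor H (comul2 k H Δ) ∘ₗ Δ))) := by rw [hfix2]
      _ = (μ ∘ₗ lTensor H (DQBAux.kap ω (Δ ∘ₗ S)
            ∘ₗ (TensorProduct.assoc k H H H).symm.toLinearMap)
            ∘ₗ exch' k H H (H ⊗[k] H) ∘ₗ lTensor H (exch' k H H H))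
            ∘ₗ (lTensor H (comul2 k H Δ) ∘ₗ Δ) := rfl
      _ = (DQBAux.rho ω ∘ₗ lTensor H (lTensor H (lTensor H μ))
            ∘ₗ lTensor H (lTensor H (exch' k H H H ∘ₗ lTensor H (Δ ∘ₗ S))))
            ∘ₗ (lTensor H (comul2 k H Δ) ∘ₗ Δ) := by rw [key2']
      _ = (DQBAux.rho ω ∘ₗ lTensor H (lTensor H (lTensor H μ))
            ∘ₗ lTensor H (lTensor H (exch' k H H H ∘ₗ lTensor H (Δ ∘ₗ S))))
            ∘ₗ (lTensor H (lTensor H Δ) ∘ₗ comul2 k H Δ) := by rw [hD3']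
      _ = DQBAux.rho ω ∘ₗ ((lTensor H (lTensor H (lTensor H μ))
            ∘ₗ lTensor H (lTensor H (exch' k H H H ∘ₗ lTensor H (Δ ∘ₗ S))))
            ∘ₗ lTensor H (lTensor H Δ)) ∘ₗ comul2 k H Δ := rfl
      _ = DQBAux.rho ω ∘ₗ (lTensor H (lTensor H (lTensor H μ
            ∘ₗ (exch' k H H H ∘ₗ lTensor H (Δ ∘ₗ S))))
            ∘ₗ lTensor H (lTensor H Δ)) ∘ₗ comul2 k H Δ := by rw [DQBAux.lT2_comp]
      _ = DQBAux.rho ω ∘ₗ lTensor H (lTensor H ((lTensor H μ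
            ∘ₗ (exch' k H H H ∘ₗ lTensor H (Δ ∘ₗ S))) ∘ₗ Δ)) ∘ₗ comul2 k H Δ := by
          rw [DQBAux.lT2_comp]
      _ = DQBAux.rho ω ∘ₗ lTensor H (lTensor H (lTensor H μ
            ∘ₗ ((exch' k H H H ∘ₗ lTensor H (Δ ∘ₗ S)) ∘ₗ Δ))) ∘ₗ comul2 k H Δ := rfl
      _ = DQBAux.rho ω ∘ₗ lTensor H (lTensor H ((TensorProduct.mk k H H).flip e ∘ₗ S))
            ∘ₗ comul2 k H Δ := by rw [c2']
      _ = (DQBAux.rho ω ∘ₗ lTensor H (lTensor H ((TensorProduct.mk k H H).flip e ∘ₗ S)))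
            ∘ₗ comul2 k H Δ := rfl
      _ = (toSpanSingleton k H e
            ∘ₗ (ω ∘ₗ lTensor H (rTensor H S ∘ₗ (TensorProduct.comm k H H).toLinearMap)))
            ∘ₗ comul2 k H Δ := by rw [DQBAux.final]
      _ = toSpanSingleton k H e
            ∘ₗ ((ω ∘ₗ lTensor H (rTensor H S ∘ₗ (TensorProduct.comm k H H).toLinearMap))
              ∘ₗ comul2 k H Δ) := rfl
      _ = toSpanSingleton k H e ∘ₗ ε := hfin
end
end

section
/- Let (H, m, u, Δ, ε, ω, S) be a cocommutative dual quasi-bialgebra with a preantipode S, and let s be the resulting antipode of the ordinary Hopf algebra (H, m, u, Δ, ε). Then S(h) = ε(S(h₁)) s(h₂) for all h ∈ H; that is, S equals the convolution product β * s where β := ε∘S. -/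
open TensorProduct LinearMap

noncomputable section

namespace DQBAux

open TensorProduct LinearMap

variable {k : Type*} [CommRing k]
variable {A B : Type*} [AddCommGroup A] [Module k A] [AddCommGroup B] [Module k B]
variable (ΔA : A →ₗ[k] A ⊗[k] A) (εA : A →ₗ[k] k) (ΔB : B →ₗ[k] B ⊗[k] B) (εB : B →ₗ[k] k)

def pΔ : A ⊗[k] B →ₗ[k] (A ⊗[k] B) ⊗[k] (A ⊗[k] B) :=
  (tensorTensorTensorComm k A A B B).toLinearMap ∘ₗ map ΔA ΔB

/-- counit on a tensor product -/
def pε : A ⊗[k] B →ₗ[k] k := (LinearMap.mul' k k) ∘ₗ map εA εB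

lemma p_cocomm (hA : (TensorProduct.comm k A A).toLinearMap ∘ₗ ΔA = ΔA)
    (hB : (TensorProduct.comm k B B).toLinearMap ∘ₗ ΔB = ΔB) :
    (TensorProduct.comm k (A ⊗[k] B) (A ⊗[k] B)).toLinearMap ∘ₗ pΔ ΔA ΔB = pΔ ΔA ΔB := by
  have hst : (TensorProduct.comm k (A ⊗[k] B) (A ⊗[k] B)).toLinearMap
      ∘ₗ (tensorTensorTensorComm k A A B B).toLinearMap =
      (tensorTensorTensorComm k A A B B).toLinearMap
        ∘ₗ map (TensorProduct.comm k A A).toLinearMap (TensorProduct.comm k B B).toLinearMap := by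
    apply TensorProduct.ext_fourfold'; intro a b c d; simp
  unfold pΔ
  simp only [← LinearMap.comp_assoc] at hst hA hB ⊢
  rw [hst, LinearMap.comp_assoc, ← TensorProduct.map_comp, hA, hB]

lemma p_counitR (hA : (TensorProduct.rid k A).toLinearMap ∘ₗ lTensor A εA ∘ₗ ΔA = LinearMap.id)
    (hB : (TensorProduct.rid k B).toLinearMap ∘ₗ lTensor B εB ∘ₗ ΔB = LinearMap.id) :
    (TensorProduct.rid k (A ⊗[k] B)).toLinearMap ∘ₗ lTensor (A ⊗[k] B) (pε εA εB)
      ∘ₗ pΔ ΔA ΔB = LinearMap.id := by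
  have hst : (TensorProduct.rid k (A ⊗[k] B)).toLinearMap ∘ₗ lTensor (A ⊗[k] B) (pε εA εB)
      ∘ₗ (tensorTensorTensorComm k A A B B).toLinearMap =
      map ((TensorProduct.rid k A).toLinearMap ∘ₗ lTensor A εA)
        ((TensorProduct.rid k B).toLinearMap ∘ₗ lTensor B εB) := by
    apply TensorProduct.ext_fourfold'; intro a b c d
    simp [pε, smul_tmul', smul_smul, mul_comm]
  unfold pΔ
  simp only [← LinearMap.comp_assoc] at hst hA hB ⊢
  rw [hst, ← TensorProduct.map_comp, hA, hB, TensorProduct.map_id]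


lemma st_ttc_nat {A' B' C' D' C D : Type*}
  [AddCommGroup A'] [Module k A'] [AddCommGroup B'] [Module k B']
  [AddCommGroup C'] [Module k C'] [AddCommGroup D'] [Module k D']
  [AddCommGroup C] [Module k C] [AddCommGroup D] [Module k D]
  (f : A →ₗ[k] A') (g : B →ₗ[k] B') (h : C →ₗ[k] C') (i : D →ₗ[k] D') :
    (tensorTensorTensorComm k A' B' C' D').toLinearMap ∘ₗ map (map f g) (map h i) =
      map (map f h) (map g i) ∘ₗ (tensorTensorTensorComm k A B C D).toLinearMap := by
  apply TensorProduct.ext_fourfold'; intro a b c d; simp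

lemma p_coassoc
    (hA : (TensorProduct.assoc k A A A).toLinearMap ∘ₗ rTensor A ΔA ∘ₗ ΔA = lTensor A ΔA ∘ₗ ΔA)
    (hB : (TensorProduct.assoc k B B B).toLinearMap ∘ₗ rTensor B ΔB ∘ₗ ΔB = lTensor B ΔB ∘ₗ ΔB) :
    (TensorProduct.assoc k (A ⊗[k] B) (A ⊗[k] B) (A ⊗[k] B)).toLinearMap
        ∘ₗ rTensor (A ⊗[k] B) (pΔ ΔA ΔB) ∘ₗ pΔ ΔA ΔB
      = lTensor (A ⊗[k] B) (pΔ ΔA ΔB) ∘ₗ pΔ ΔA ΔB := by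
  have hA' : rTensor A ΔA ∘ₗ ΔA
      = (TensorProduct.assoc k A A A).symm.toLinearMap ∘ₗ (lTensor A ΔA ∘ₗ ΔA) :=
    (LinearEquiv.eq_toLinearMap_symm_comp _ _).mpr (by rw [← hA])
  have hB' : rTensor B ΔB ∘ₗ ΔB
      = (TensorProduct.assoc k B B B).symm.toLinearMap ∘ₗ (lTensor B ΔB ∘ₗ ΔB) :=
    (LinearEquiv.eq_toLinearMap_symm_comp _ _).mpr (by rw [← hB])
  have h1 := st_ttc_nat (k := k) (LinearMap.id (M := A)) ΔA (LinearMap.id (M := B)) ΔB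
  have h2 := st_ttc_nat (k := k) ΔA (LinearMap.id (M := A)) ΔB (LinearMap.id (M := B))
  rw [TensorProduct.map_id] at h1 h2
  have h1' : (tensorTensorTensorComm k A (A ⊗[k] A) B (B ⊗[k] B)).toLinearMap
      ∘ₗ map (lTensor A ΔA) (lTensor B ΔB)
      = lTensor (A ⊗[k] B) (map ΔA ΔB) ∘ₗ (tensorTensorTensorComm k A A B B).toLinearMap := h1
  have h2' : (tensorTensorTensorComm k (A ⊗[k] A) A (B ⊗[k] B) B).toLinearMap
      ∘ₗ map (rTensor A ΔA) (rTensor B ΔB)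
      = rTensor (A ⊗[k] B) (map ΔA ΔB) ∘ₗ (tensorTensorTensorComm k A A B B).toLinearMap := h2
  have hXi : ((TensorProduct.assoc k (A ⊗[k] B) (A ⊗[k] B) (A ⊗[k] B)).toLinearMap
        ∘ₗ rTensor (A ⊗[k] B) (tensorTensorTensorComm k A A B B).toLinearMap
        ∘ₗ (tensorTensorTensorComm k (A ⊗[k] A) A (B ⊗[k] B) B).toLinearMap)
        ∘ₗ map (TensorProduct.assoc k A A A).symm.toLinearMap
            (TensorProduct.assoc k B B B).symm.toLinearMap
      = lTensor (A ⊗[k] B) (tensorTensorTensorComm k A A B B).toLinearMap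
        ∘ₗ (tensorTensorTensorComm k A (A ⊗[k] A) B (B ⊗[k] B)).toLinearMap := by
    ext a a' a'' b b' b''
    simp
  calc (TensorProduct.assoc k (A ⊗[k] B) (A ⊗[k] B) (A ⊗[k] B)).toLinearMap
        ∘ₗ rTensor (A ⊗[k] B) (pΔ ΔA ΔB) ∘ₗ pΔ ΔA ΔB
      = (TensorProduct.assoc k (A ⊗[k] B) (A ⊗[k] B) (A ⊗[k] B)).toLinearMap
        ∘ₗ rTensor (A ⊗[k] B) (tensorTensorTensorComm k A A B B).toLinearMap
        ∘ₗ ((rTensor (A ⊗[k] B) (map ΔA ΔB)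
              ∘ₗ (tensorTensorTensorComm k A A B B).toLinearMap) ∘ₗ map ΔA ΔB) := by
        unfold pΔ; rw [rTensor_comp]; try simp only [LinearMap.comp_assoc]
    _ = (TensorProduct.assoc k (A ⊗[k] B) (A ⊗[k] B) (A ⊗[k] B)).toLinearMap
        ∘ₗ rTensor (A ⊗[k] B) (tensorTensorTensorComm k A A B B).toLinearMap
        ∘ₗ ((tensorTensorTensorComm k (A ⊗[k] A) A (B ⊗[k] B) B).toLinearMap
            ∘ₗ (map (rTensor A ΔA) (rTensor B ΔB) ∘ₗ map ΔA ΔB)) := by rw [← h2']; try simp only [LinearMap.comp_assoc]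
    _ = (TensorProduct.assoc k (A ⊗[k] B) (A ⊗[k] B) (A ⊗[k] B)).toLinearMap
        ∘ₗ rTensor (A ⊗[k] B) (tensorTensorTensorComm k A A B B).toLinearMap
        ∘ₗ ((tensorTensorTensorComm k (A ⊗[k] A) A (B ⊗[k] B) B).toLinearMap
            ∘ₗ map (rTensor A ΔA ∘ₗ ΔA) (rTensor B ΔB ∘ₗ ΔB)) := by
        rw [← TensorProduct.map_comp]; try simp only [LinearMap.comp_assoc]
    _ = (TensorProduct.assoc k (A ⊗[k] B) (A ⊗[k] B) (A ⊗[k] B)).toLinearMap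
        ∘ₗ rTensor (A ⊗[k] B) (tensorTensorTensorComm k A A B B).toLinearMap
        ∘ₗ ((tensorTensorTensorComm k (A ⊗[k] A) A (B ⊗[k] B) B).toLinearMap
            ∘ₗ (map (TensorProduct.assoc k A A A).symm.toLinearMap
                  (TensorProduct.assoc k B B B).symm.toLinearMap
                ∘ₗ map (lTensor A ΔA ∘ₗ ΔA) (lTensor B ΔB ∘ₗ ΔB))) := by
        rw [hA', hB', TensorProduct.map_comp]; try simp only [LinearMap.comp_assoc]
    _ = (((TensorProduct.assoc k (A ⊗[k] B) (A ⊗[k] B) (A ⊗[k] B)).toLinearMap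
        ∘ₗ rTensor (A ⊗[k] B) (tensorTensorTensorComm k A A B B).toLinearMap
        ∘ₗ (tensorTensorTensorComm k (A ⊗[k] A) A (B ⊗[k] B) B).toLinearMap)
        ∘ₗ map (TensorProduct.assoc k A A A).symm.toLinearMap
            (TensorProduct.assoc k B B B).symm.toLinearMap)
        ∘ₗ map (lTensor A ΔA ∘ₗ ΔA) (lTensor B ΔB ∘ₗ ΔB) := by simp only [LinearMap.comp_assoc]
    _ = (lTensor (A ⊗[k] B) (tensorTensorTensorComm k A A B B).toLinearMap
        ∘ₗ (tensorTensorTensorComm k A (A ⊗[k] A) B (B ⊗[k] B)).toLinearMap)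
        ∘ₗ map (lTensor A ΔA ∘ₗ ΔA) (lTensor B ΔB ∘ₗ ΔB) := by rw [hXi]; try simp only [LinearMap.comp_assoc]
    _ = lTensor (A ⊗[k] B) (tensorTensorTensorComm k A A B B).toLinearMap
        ∘ₗ (((tensorTensorTensorComm k A (A ⊗[k] A) B (B ⊗[k] B)).toLinearMap
          ∘ₗ map (lTensor A ΔA) (lTensor B ΔB)) ∘ₗ map ΔA ΔB) := by
        rw [TensorProduct.map_comp]; try simp only [LinearMap.comp_assoc]
    _ = lTensor (A ⊗[k] B) (tensorTensorTensorComm k A A B B).toLinearMap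
        ∘ₗ ((lTensor (A ⊗[k] B) (map ΔA ΔB)
          ∘ₗ (tensorTensorTensorComm k A A B B).toLinearMap) ∘ₗ map ΔA ΔB) := by rw [h1']; try simp only [LinearMap.comp_assoc]
    _ = lTensor (A ⊗[k] B) (pΔ ΔA ΔB) ∘ₗ pΔ ΔA ΔB := by
        unfold pΔ; rw [lTensor_comp]; try simp only [LinearMap.comp_assoc]


variable {k : Type*} [CommRing k]

section Structural
variable {A B C M : Type*}
  [AddCommGroup A] [Module k A] [AddCommGroup B] [Module k B]
  [AddCommGroup C] [Module k C] [AddCommGroup M] [Module k M]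

lemma st_smulRight_comp (φ : A →ₗ[k] k) (e : B) (f : C →ₗ[k] A) :
    (φ.smulRight e) ∘ₗ f = (φ ∘ₗ f).smulRight e := by
  ext x; simp

lemma st_rid_map (f : A →ₗ[k] M) (φ : B →ₗ[k] k) :
    (TensorProduct.rid k M).toLinearMap ∘ₗ map f φ =
      f ∘ₗ (TensorProduct.rid k A).toLinearMap ∘ₗ lTensor A φ := by
  apply TensorProduct.ext'; intro a b; simp

lemma st_lid_map (φ : A →ₗ[k] k) (f : B →ₗ[k] M) :
    (TensorProduct.lid k M).toLinearMap ∘ₗ map φ f =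
      f ∘ₗ (TensorProduct.lid k B).toLinearMap ∘ₗ rTensor B φ := by
  apply TensorProduct.ext'; intro a b; simp

lemma st_lid_comm (φ : B →ₗ[k] k) :
    (TensorProduct.lid k A).toLinearMap ∘ₗ rTensor A φ ∘ₗ (TensorProduct.comm k A B).toLinearMap =
      (TensorProduct.rid k A).toLinearMap ∘ₗ lTensor A φ := by
  apply TensorProduct.ext'; intro a b; simp

lemma st_comul_smul (Δc : A →ₗ[k] A ⊗[k] A) (ψ : B →ₗ[k] k) :
    Δc ∘ₗ (TensorProduct.rid k A).toLinearMap ∘ₗ lTensor A ψ =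
      (TensorProduct.rid k (A ⊗[k] A)).toLinearMap ∘ₗ lTensor (A ⊗[k] A) ψ ∘ₗ rTensor B Δc := by
  apply TensorProduct.ext'; intro a b; simp

lemma st_rid_double (φ ψ : A →ₗ[k] k) :
    (TensorProduct.rid k A).toLinearMap ∘ₗ lTensor A φ
        ∘ₗ (TensorProduct.rid k (A ⊗[k] A)).toLinearMap ∘ₗ lTensor (A ⊗[k] A) ψ =
      (TensorProduct.rid k A).toLinearMap
        ∘ₗ lTensor A ((LinearMap.mul' k k) ∘ₗ map φ ψ)
        ∘ₗ (TensorProduct.assoc k A A A).toLinearMap := by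
  apply TensorProduct.ext_threefold; intro a b c
  simp [smul_smul, mul_comm]

lemma st_map_splitL {B' : Type*} [AddCommGroup B'] [Module k B']
    (f : A →ₗ[k] M) (P : B' →ₗ[k] C) (Q : B →ₗ[k] B') :
    map f (P ∘ₗ Q) = map f P ∘ₗ lTensor A Q := by
  apply TensorProduct.ext'; intro a b; simp

lemma st_map_splitL' {B' : Type*} [AddCommGroup B'] [Module k B']
    (f : A →ₗ[k] M) (P : B' →ₗ[k] C) (Q : B →ₗ[k] B') :
    map f (P ∘ₗ Q) = lTensor M P ∘ₗ map f Q := by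
  apply TensorProduct.ext'; intro a b; simp

lemma st_map_splitR {A' : Type*} [AddCommGroup A'] [Module k A']
    (P : A' →ₗ[k] C) (Q : A →ₗ[k] A') (g : B →ₗ[k] M) :
    map (P ∘ₗ Q) g = rTensor M P ∘ₗ map Q g := by
  apply TensorProduct.ext'; intro a b; simp

lemma st_map_factor (f : A →ₗ[k] C) (g : B →ₗ[k] M) :
    map f g = lTensor C g ∘ₗ rTensor B f := by
  apply TensorProduct.ext'; intro a b; simp

end Structural

section Conv
variable {C H : Type*} [AddCommGroup C] [Module k C] [AddCommGroup H] [Module k H]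

/-- right convolution with a functional, canonical form -/
def cvR (Δc : C →ₗ[k] C ⊗[k] C) (f : C →ₗ[k] H) (φ : C →ₗ[k] k) : C →ₗ[k] H :=
  f ∘ₗ (TensorProduct.rid k C).toLinearMap ∘ₗ lTensor C φ ∘ₗ Δc

/-- left convolution with a functional, canonical form -/
def cvL (Δc : C →ₗ[k] C ⊗[k] C) (φ : C →ₗ[k] k) (f : C →ₗ[k] H) : C →ₗ[k] H :=
  f ∘ₗ (TensorProduct.lid k C).toLinearMap ∘ₗ rTensor C φ ∘ₗ Δc

variable (Δc : C →ₗ[k] C ⊗[k] C) (εc : C →ₗ[k] k)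

lemma cvR_counit (hcu : (TensorProduct.rid k C).toLinearMap ∘ₗ lTensor C εc ∘ₗ Δc = LinearMap.id)
    (f : C →ₗ[k] H) : cvR Δc f εc = f := by
  unfold cvR
  rw [show f ∘ₗ (TensorProduct.rid k C).toLinearMap ∘ₗ lTensor C εc ∘ₗ Δc
    = f ∘ₗ ((TensorProduct.rid k C).toLinearMap ∘ₗ lTensor C εc ∘ₗ Δc) from rfl, hcu, comp_id]

lemma cvL_eq_cvR (hcc : (TensorProduct.comm k C C).toLinearMap ∘ₗ Δc = Δc)
    (φ : C →ₗ[k] k) (f : C →ₗ[k] H) : cvL Δc φ f = cvR Δc f φ := by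
  unfold cvL cvR
  conv_lhs => rw [← hcc]
  rw [show f ∘ₗ (TensorProduct.lid k C).toLinearMap ∘ₗ rTensor C φ
        ∘ₗ (TensorProduct.comm k C C).toLinearMap ∘ₗ Δc
      = f ∘ₗ ((TensorProduct.lid k C).toLinearMap ∘ₗ rTensor C φ
        ∘ₗ (TensorProduct.comm k C C).toLinearMap) ∘ₗ Δc from rfl, st_lid_comm]
  rfl

lemma cvR_cvR
    (hco : (TensorProduct.assoc k C C C).toLinearMap ∘ₗ rTensor C Δc ∘ₗ Δc = lTensor C Δc ∘ₗ Δc)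
    (f : C →ₗ[k] H) (φ ψ : C →ₗ[k] k) :
    cvR Δc (cvR Δc f φ) ψ = cvR Δc f ((LinearMap.mul' k k) ∘ₗ map φ ψ ∘ₗ Δc) := by
  unfold cvR
  calc (f ∘ₗ (TensorProduct.rid k C).toLinearMap ∘ₗ lTensor C φ ∘ₗ Δc)
        ∘ₗ (TensorProduct.rid k C).toLinearMap ∘ₗ lTensor C ψ ∘ₗ Δc
      = f ∘ₗ (TensorProduct.rid k C).toLinearMap ∘ₗ lTensor C φ
          ∘ₗ ((Δc ∘ₗ (TensorProduct.rid k C).toLinearMap ∘ₗ lTensor C ψ) ∘ₗ Δc) := by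
        simp only [LinearMap.comp_assoc]
    _ = f ∘ₗ ((TensorProduct.rid k C).toLinearMap ∘ₗ lTensor C φ
          ∘ₗ (TensorProduct.rid k (C ⊗[k] C)).toLinearMap ∘ₗ lTensor (C ⊗[k] C) ψ)
          ∘ₗ rTensor C Δc ∘ₗ Δc := by
        rw [st_comul_smul]; simp only [LinearMap.comp_assoc]
    _ = f ∘ₗ ((TensorProduct.rid k C).toLinearMap
          ∘ₗ lTensor C ((LinearMap.mul' k k) ∘ₗ map φ ψ)
          ∘ₗ (TensorProduct.assoc k C C C).toLinearMap)
          ∘ₗ rTensor C Δc ∘ₗ Δc := by rw [st_rid_double]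
    _ = f ∘ₗ (TensorProduct.rid k C).toLinearMap
          ∘ₗ lTensor C ((LinearMap.mul' k k) ∘ₗ map φ ψ)
          ∘ₗ ((TensorProduct.assoc k C C C).toLinearMap ∘ₗ rTensor C Δc ∘ₗ Δc) := by
        simp only [LinearMap.comp_assoc]
    _ = f ∘ₗ (TensorProduct.rid k C).toLinearMap
          ∘ₗ lTensor C ((LinearMap.mul' k k) ∘ₗ map φ ψ)
          ∘ₗ lTensor C Δc ∘ₗ Δc := by rw [hco]
    _ = f ∘ₗ (TensorProduct.rid k C).toLinearMap
          ∘ₗ lTensor C ((LinearMap.mul' k k) ∘ₗ map φ ψ ∘ₗ Δc) ∘ₗ Δc := by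
        simp only [← lTensor_comp, ← LinearMap.comp_assoc]
end Conv

section Target
variable {C C' H : Type*} [AddCommGroup C] [Module k C] [AddCommGroup C'] [Module k C']
  [AddCommGroup H] [Module k H]
variable (μ : H ⊗[k] H →ₗ[k] H) (e : H)

lemma st_mul_mapR (hmul_one : ∀ x : H, μ (x ⊗ₜ[k] e) = x) (f : C →ₗ[k] H) (φ : C' →ₗ[k] k) :
    μ ∘ₗ map f (φ.smulRight e) =
      f ∘ₗ (TensorProduct.rid k C).toLinearMap ∘ₗ lTensor C φ := by
  apply TensorProduct.ext'; intro a b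
  simp [hmul_one]

lemma st_mul_mapL (hone_mul : ∀ x : H, μ (e ⊗ₜ[k] x) = x) (φ : C →ₗ[k] k) (f : C' →ₗ[k] H) :
    μ ∘ₗ map (φ.smulRight e) f =
      f ∘ₗ (TensorProduct.lid k C').toLinearMap ∘ₗ rTensor C' φ := by
  apply TensorProduct.ext'; intro a b
  simp only [comp_apply, map_tmul, smulRight_apply, LinearEquiv.coe_coe, rTensor_tmul,
    lid_tmul, map_smul]
  rw [← smul_tmul', map_smul, hone_mul]

end Target



section Main
variable {k : Type*} [CommRing k] {H : Type*} [AddCommGroup H] [Module k H]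
variable (Δ : H →ₗ[k] H ⊗[k] H) (ε : H →ₗ[k] k) (μ : H ⊗[k] H →ₗ[k] H) (e : H)
variable (ω ωInv : H ⊗[k] (H ⊗[k] H) →ₗ[k] k) (S : H →ₗ[k] H)

/-- convolution of two `H`-valued maps -/
def cv (f g : H →ₗ[k] H) : H →ₗ[k] H := μ ∘ₗ map f g ∘ₗ Δ

lemma convMK_eq {C M : Type*} [AddCommGroup C] [Module k C] [AddCommGroup M] [Module k M]
    (δ : C →ₗ[k] C ⊗[k] C) (f : C →ₗ[k] M) (φ : C →ₗ[k] k) :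
    DQB.convMK k C M δ f φ = cvR δ f φ := by
  unfold DQB.convMK cvR
  rw [← LinearMap.comp_assoc, st_rid_map]
  simp only [LinearMap.comp_assoc]

lemma convKM_eq {C M : Type*} [AddCommGroup C] [Module k C] [AddCommGroup M] [Module k M]
    (δ : C →ₗ[k] C ⊗[k] C) (φ : C →ₗ[k] k) (f : C →ₗ[k] M) :
    DQB.convKM k C M δ φ f = cvL δ φ f := by
  unfold DQB.convKM cvL
  rw [← LinearMap.comp_assoc, st_lid_map]
  simp only [LinearMap.comp_assoc]

lemma mu_assoc (hH : DQB.IsDualQuasiBialgebra k H Δ ε μ e ω ωInv)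
    (hcoc : (TensorProduct.comm k H H).toLinearMap ∘ₗ Δ = Δ) :
    μ ∘ₗ lTensor H μ =
      μ ∘ₗ rTensor H μ ∘ₗ (TensorProduct.assoc k H H H).symm.toLinearMap := by
  have hccT : (TensorProduct.comm k (H ⊗[k] H) (H ⊗[k] H)).toLinearMap
      ∘ₗ DQB.comulT k H Δ = DQB.comulT k H Δ := p_cocomm Δ Δ hcoc hcoc
  have hcc3 : (TensorProduct.comm k (H ⊗[k] (H ⊗[k] H)) (H ⊗[k] (H ⊗[k] H))).toLinearMap
      ∘ₗ DQB.comul3 k H Δ = DQB.comul3 k H Δ := p_cocomm Δ (DQB.comulT k H Δ) hcoc hccT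
  have hcoT := p_coassoc Δ Δ hH.coassoc hH.coassoc
  have hco3 : (TensorProduct.assoc k (H ⊗[k] (H ⊗[k] H)) (H ⊗[k] (H ⊗[k] H))
        (H ⊗[k] (H ⊗[k] H))).toLinearMap
      ∘ₗ rTensor (H ⊗[k] (H ⊗[k] H)) (DQB.comul3 k H Δ) ∘ₗ DQB.comul3 k H Δ
      = lTensor (H ⊗[k] (H ⊗[k] H)) (DQB.comul3 k H Δ) ∘ₗ DQB.comul3 k H Δ :=
    p_coassoc Δ (DQB.comulT k H Δ) hH.coassoc hcoT
  have hcuT := p_counitR Δ ε Δ ε hH.comul_counit hH.comul_counit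
  have hcu3 : (TensorProduct.rid k (H ⊗[k] (H ⊗[k] H))).toLinearMap
      ∘ₗ lTensor (H ⊗[k] (H ⊗[k] H)) (DQB.counit3 k H ε) ∘ₗ DQB.comul3 k H Δ = LinearMap.id :=
    p_counitR Δ ε (DQB.comulT k H Δ) (DQB.counit2 k H ε) hH.comul_counit hcuT
  have hq : cvR (DQB.comul3 k H Δ) (μ ∘ₗ lTensor H μ) ω
      = cvR (DQB.comul3 k H Δ)
          (μ ∘ₗ rTensor H μ ∘ₗ (TensorProduct.assoc k H H H).symm.toLinearMap) ω := by
    have h := hH.quasi_assoc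
    rw [convMK_eq, convKM_eq] at h
    rw [h, cvL_eq_cvR _ hcc3]
  have key : ∀ F : H ⊗[k] (H ⊗[k] H) →ₗ[k] H,
      cvR (DQB.comul3 k H Δ) (cvR (DQB.comul3 k H Δ) F ω) ωInv = F := by
    intro F
    rw [cvR_cvR _ hco3]
    have : (LinearMap.mul' k k) ∘ₗ map ω ωInv ∘ₗ DQB.comul3 k H Δ = DQB.counit3 k H ε :=
      hH.omega_invL
    rw [this, cvR_counit _ _ hcu3]
  calc μ ∘ₗ lTensor H μ
      = cvR (DQB.comul3 k H Δ) (cvR (DQB.comul3 k H Δ) (μ ∘ₗ lTensor H μ) ω) ωInv :=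
        (key _).symm
    _ = cvR (DQB.comul3 k H Δ) (cvR (DQB.comul3 k H Δ)
          (μ ∘ₗ rTensor H μ ∘ₗ (TensorProduct.assoc k H H H).symm.toLinearMap) ω) ωInv := by
        rw [hq]
    _ = μ ∘ₗ rTensor H μ ∘ₗ (TensorProduct.assoc k H H H).symm.toLinearMap := key _

lemma st_map_swap {A A' B C M : Type*}
    [AddCommGroup A] [Module k A] [AddCommGroup A'] [Module k A']
    [AddCommGroup B] [Module k B] [AddCommGroup C] [Module k C]
    [AddCommGroup M] [Module k M]
    (X : A' →ₗ[k] C) (Y : A →ₗ[k] A') (h : B →ₗ[k] M) :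
    map X h ∘ₗ rTensor B Y = rTensor M X ∘ₗ map Y h := by
  apply TensorProduct.ext'; intro a b; simp

lemma cv_assoc (hco : (TensorProduct.assoc k H H H).toLinearMap ∘ₗ rTensor H Δ ∘ₗ Δ
      = lTensor H Δ ∘ₗ Δ)
    (hassoc : μ ∘ₗ lTensor H μ =
      μ ∘ₗ rTensor H μ ∘ₗ (TensorProduct.assoc k H H H).symm.toLinearMap)
    (f g h : H →ₗ[k] H) :
    cv Δ μ f (cv Δ μ g h) = cv Δ μ (cv Δ μ f g) h := by
  have hco' : (TensorProduct.assoc k H H H).symm.toLinearMap ∘ₗ (lTensor H Δ ∘ₗ Δ)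
      = rTensor H Δ ∘ₗ Δ :=
    (LinearEquiv.toLinearMap_symm_comp_eq _ _).mpr (by rw [← hco])
  unfold cv
  calc μ ∘ₗ map f (μ ∘ₗ map g h ∘ₗ Δ) ∘ₗ Δ
      = μ ∘ₗ (lTensor H μ ∘ₗ (map f (map g h) ∘ₗ lTensor H Δ)) ∘ₗ Δ := by
        rw [st_map_splitL' f μ (map g h ∘ₗ Δ), st_map_splitL f (map g h) Δ]
    _ = (μ ∘ₗ lTensor H μ)
          ∘ₗ map f (map g h) ∘ₗ lTensor H Δ ∘ₗ Δ := by
        simp only [LinearMap.comp_assoc]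
    _ = μ ∘ₗ rTensor H μ
          ∘ₗ ((TensorProduct.assoc k H H H).symm.toLinearMap ∘ₗ map f (map g h))
          ∘ₗ lTensor H Δ ∘ₗ Δ := by
        rw [hassoc]; simp only [LinearMap.comp_assoc]
    _ = μ ∘ₗ rTensor H μ
          ∘ₗ map (map f g) h
          ∘ₗ ((TensorProduct.assoc k H H H).symm.toLinearMap ∘ₗ (lTensor H Δ ∘ₗ Δ)) := by
        rw [← TensorProduct.map_map_comp_assoc_symm_eq]; simp only [LinearMap.comp_assoc]
    _ = μ ∘ₗ rTensor H μ ∘ₗ (map (map f g) h ∘ₗ rTensor H Δ) ∘ₗ Δ := by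
        rw [hco']; simp only [LinearMap.comp_assoc]
    _ = μ ∘ₗ (rTensor H μ ∘ₗ rTensor H (map f g)) ∘ₗ map Δ h ∘ₗ Δ := by
        rw [st_map_swap]; simp only [LinearMap.comp_assoc]
    _ = μ ∘ₗ map (μ ∘ₗ map f g ∘ₗ Δ) h ∘ₗ Δ := by
        rw [st_map_splitR μ (map f g ∘ₗ Δ) h, st_map_splitR (map f g) Δ h]; simp only [LinearMap.comp_assoc]

lemma claimA (hH : DQB.IsDualQuasiBialgebra k H Δ ε μ e ω ωInv)
    (hS : DQB.IsPreantipode k H Δ ε μ e ω S) :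
    μ ∘ₗ lTensor H S ∘ₗ Δ = (ε ∘ₗ S).smulRight e := by
  have st_a : (TensorProduct.lid k H).toLinearMap ∘ₗ rTensor H ε ∘ₗ lTensor H μ
      = μ ∘ₗ (TensorProduct.lid k (H ⊗[k] H)).toLinearMap ∘ₗ rTensor (H ⊗[k] H) ε := by
    apply TensorProduct.ext'; intro a b; simp
  have st_b : (TensorProduct.lid k (H ⊗[k] H)).toLinearMap ∘ₗ rTensor (H ⊗[k] H) ε
        ∘ₗ DQB.exch' k H H H
      = lTensor H ((TensorProduct.lid k H).toLinearMap ∘ₗ rTensor H ε) := by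
    apply TensorProduct.ext'; intro a b
    induction b using TensorProduct.induction_on with
    | zero => simp
    | tmul x y => simp [DQB.exch']
    | add x y hx hy => simp_all [tmul_add]
  have st_c : ((TensorProduct.lid k H).toLinearMap ∘ₗ rTensor H ε)
        ∘ₗ (TensorProduct.mk k H H).flip e
      = ε.smulRight e := by
    ext x; simp
  have hS' : S = ((TensorProduct.lid k H).toLinearMap ∘ₗ rTensor H ε) ∘ₗ (Δ ∘ₗ S) := by
    have : ((TensorProduct.lid k H).toLinearMap ∘ₗ rTensor H ε) ∘ₗ Δ = LinearMap.id := by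
      rw [LinearMap.comp_assoc]; exact hH.counit_comul
    rw [← LinearMap.comp_assoc, this, LinearMap.id_comp]
  calc μ ∘ₗ lTensor H S ∘ₗ Δ
      = μ ∘ₗ (lTensor H ((TensorProduct.lid k H).toLinearMap ∘ₗ rTensor H ε)
          ∘ₗ lTensor H (Δ ∘ₗ S)) ∘ₗ Δ := by
        conv_lhs => rw [hS']
        rw [lTensor_comp]
    _ = ((TensorProduct.lid k H).toLinearMap ∘ₗ rTensor H ε)
          ∘ₗ (lTensor H μ ∘ₗ DQB.exch' k H H H ∘ₗ lTensor H (Δ ∘ₗ S) ∘ₗ Δ) := by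
        rw [← st_b]
        simp only [← LinearMap.comp_assoc] at st_a ⊢
        rw [st_a]
    _ = ((TensorProduct.lid k H).toLinearMap ∘ₗ rTensor H ε)
          ∘ₗ ((TensorProduct.mk k H H).flip e ∘ₗ S) := by rw [hS.cond2]
    _ = (ε ∘ₗ S).smulRight e := by
        rw [← LinearMap.comp_assoc, st_c, st_smulRight_comp]

/-- the tail of `sAntipode` -/
def QQ (ω : H ⊗[k] (H ⊗[k] H) →ₗ[k] k) : (H ⊗[k] H) ⊗[k] (H ⊗[k] H) →ₗ[k] H :=
  (TensorProduct.rid k H).toLinearMap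
    ∘ₗ lTensor H ω
    ∘ₗ lTensor H (DQB.exch' k H H H)
    ∘ₗ (TensorProduct.assoc k H H (H ⊗[k] H)).toLinearMap
    ∘ₗ (TensorProduct.comm k (H ⊗[k] H) (H ⊗[k] H)).toLinearMap

/-- the map underlying the first preantipode condition -/
def KK : H ⊗[k] H →ₗ[k] H ⊗[k] H :=
  rTensor H μ ∘ₗ DQB.exch k H H H ∘ₗ rTensor H (Δ ∘ₗ S)

lemma st_SL :
    μ ∘ₗ rTensor H (QQ ω ∘ₗ lTensor (H ⊗[k] H) (Δ ∘ₗ S))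
        ∘ₗ (TensorProduct.assoc k (H ⊗[k] H) H H).symm.toLinearMap
      = QQ ω ∘ₗ lTensor (H ⊗[k] H) (KK Δ μ S) := by
  apply TensorProduct.ext_fourfold'; intro a b c d
  simp only [QQ, KK, comp_apply, LinearEquiv.coe_coe, assoc_symm_tmul, rTensor_tmul, lTensor_tmul]
  generalize Δ (S c) = t
  induction t using TensorProduct.induction_on with
  | zero => simp [DQB.exch, tmul_zero]
  | tmul p q =>
      simp [DQB.exch, DQB.exch', tmul_smul, smul_tmul']
      rw [← smul_tmul', map_smul]
  | add x y hx hy =>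
      simp only [comm_tmul, tmul_add, add_tmul, map_add] at hx hy ⊢
      rw [hx, hy]

lemma st_T (hco : (TensorProduct.assoc k H H H).toLinearMap ∘ₗ rTensor H Δ ∘ₗ Δ
      = lTensor H Δ ∘ₗ Δ) :
    rTensor H (rTensor H Δ ∘ₗ Δ) ∘ₗ Δ
      = (TensorProduct.assoc k (H ⊗[k] H) H H).symm.toLinearMap ∘ₗ map Δ Δ ∘ₗ Δ := by
  have hco' : rTensor H Δ ∘ₗ Δ
      = (TensorProduct.assoc k H H H).symm.toLinearMap ∘ₗ (lTensor H Δ ∘ₗ Δ) :=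
    (LinearEquiv.eq_toLinearMap_symm_comp _ _).mpr (by rw [← hco])
  have hnat : rTensor H (rTensor H Δ) ∘ₗ (TensorProduct.assoc k H H H).symm.toLinearMap
      = (TensorProduct.assoc k (H ⊗[k] H) H H).symm.toLinearMap ∘ₗ rTensor (H ⊗[k] H) Δ := by
    have h := TensorProduct.map_map_comp_assoc_symm_eq (R := k) Δ
      (LinearMap.id (M := H)) (LinearMap.id (M := H))
    rw [TensorProduct.map_id] at h
    exact h
  have hfac : rTensor (H ⊗[k] H) Δ ∘ₗ lTensor H Δ = map Δ Δ := by
    apply TensorProduct.ext'; intro a b; simp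
  calc rTensor H (rTensor H Δ ∘ₗ Δ) ∘ₗ Δ
      = rTensor H (rTensor H Δ) ∘ₗ (rTensor H Δ ∘ₗ Δ) := by
        rw [rTensor_comp]; simp only [LinearMap.comp_assoc]
    _ = (rTensor H (rTensor H Δ) ∘ₗ (TensorProduct.assoc k H H H).symm.toLinearMap)
          ∘ₗ (lTensor H Δ ∘ₗ Δ) := by
        rw [hco']; simp only [LinearMap.comp_assoc]
    _ = (TensorProduct.assoc k (H ⊗[k] H) H H).symm.toLinearMap
          ∘ₗ (rTensor (H ⊗[k] H) Δ ∘ₗ lTensor H Δ) ∘ₗ Δ := by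
        rw [hnat]; simp only [LinearMap.comp_assoc]
    _ = (TensorProduct.assoc k (H ⊗[k] H) H H).symm.toLinearMap ∘ₗ map Δ Δ ∘ₗ Δ := by
        rw [hfac]

lemma hphi (hco : (TensorProduct.assoc k H H H).toLinearMap ∘ₗ rTensor H Δ ∘ₗ Δ
      = lTensor H Δ ∘ₗ Δ)
    (hcoc : (TensorProduct.comm k H H).toLinearMap ∘ₗ Δ = Δ)
    (hc3 : ω ∘ₗ (lTensor H (rTensor H S)) ∘ₗ DQB.comul2 k H Δ = ε) :
    ω ∘ₗ lTensor H (TensorProduct.comm k H H).toLinearMap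
      ∘ₗ (TensorProduct.assoc k H H H).toLinearMap ∘ₗ map Δ S ∘ₗ Δ = ε := by
  have hnat2 : lTensor H (lTensor H S) ∘ₗ (TensorProduct.assoc k H H H).toLinearMap
      = (TensorProduct.assoc k H H H).toLinearMap ∘ₗ lTensor (H ⊗[k] H) S := by
    have h := TensorProduct.map_map_comp_assoc_eq (R := k)
      (LinearMap.id (M := H)) (LinearMap.id (M := H)) S
    rw [TensorProduct.map_id] at h
    exact h
  have hcs : (TensorProduct.comm k H H).toLinearMap ∘ₗ lTensor H S
      = rTensor H S ∘ₗ (TensorProduct.comm k H H).toLinearMap := by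
    apply TensorProduct.ext'; intro a b; simp
  calc ω ∘ₗ lTensor H (TensorProduct.comm k H H).toLinearMap
      ∘ₗ (TensorProduct.assoc k H H H).toLinearMap ∘ₗ map Δ S ∘ₗ Δ
      = ω ∘ₗ lTensor H (TensorProduct.comm k H H).toLinearMap
        ∘ₗ ((TensorProduct.assoc k H H H).toLinearMap ∘ₗ lTensor (H ⊗[k] H) S)
        ∘ₗ rTensor H Δ ∘ₗ Δ := by
        rw [st_map_factor Δ S]; simp only [LinearMap.comp_assoc]
    _ = ω ∘ₗ lTensor H (TensorProduct.comm k H H).toLinearMap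
        ∘ₗ lTensor H (lTensor H S)
        ∘ₗ ((TensorProduct.assoc k H H H).toLinearMap ∘ₗ rTensor H Δ ∘ₗ Δ) := by
        rw [← hnat2]; simp only [LinearMap.comp_assoc]
    _ = ω ∘ₗ lTensor H (((TensorProduct.comm k H H).toLinearMap ∘ₗ lTensor H S) ∘ₗ Δ) ∘ₗ Δ := by
        rw [hco]; simp only [← lTensor_comp, ← LinearMap.comp_assoc]
    _ = ω ∘ₗ lTensor H (rTensor H S ∘ₗ ((TensorProduct.comm k H H).toLinearMap ∘ₗ Δ)) ∘ₗ Δ := by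
        rw [hcs]; simp only [LinearMap.comp_assoc]
    _ = ω ∘ₗ lTensor H (rTensor H S ∘ₗ Δ) ∘ₗ Δ := by rw [hcoc]
    _ = ε := by
        rw [lTensor_comp]
        simpa [DQB.comul2, ← LinearMap.comp_assoc] using hc3

lemma step3 (hH : DQB.IsDualQuasiBialgebra k H Δ ε μ e ω ωInv)
    (hS : DQB.IsPreantipode k H Δ ε μ e ω S)
    (hcoc : (TensorProduct.comm k H H).toLinearMap ∘ₗ Δ = Δ) :
    μ ∘ₗ rTensor H (DQB.sAntipode k H Δ ω S) ∘ₗ Δ = ε.smulRight e := by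
  have hfact : DQB.sAntipode k H Δ ω S
      = (QQ ω ∘ₗ lTensor (H ⊗[k] H) (Δ ∘ₗ S)) ∘ₗ (rTensor H Δ ∘ₗ Δ) := rfl
  have hK : KK Δ μ S ∘ₗ Δ = TensorProduct.mk k H H e ∘ₗ S := hS.cond1
  have hQ1 : QQ ω ∘ₗ lTensor (H ⊗[k] H) (TensorProduct.mk k H H e)
      = (ω ∘ₗ lTensor H (TensorProduct.comm k H H).toLinearMap
          ∘ₗ (TensorProduct.assoc k H H H).toLinearMap).smulRight e := by
    apply TensorProduct.ext_threefold; intro a b q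
    simp [QQ, DQB.exch']
  calc μ ∘ₗ rTensor H (DQB.sAntipode k H Δ ω S) ∘ₗ Δ
      = μ ∘ₗ rTensor H (QQ ω ∘ₗ lTensor (H ⊗[k] H) (Δ ∘ₗ S))
          ∘ₗ (rTensor H (rTensor H Δ ∘ₗ Δ) ∘ₗ Δ) := by
        rw [hfact, rTensor_comp]; simp only [LinearMap.comp_assoc]
    _ = (μ ∘ₗ rTensor H (QQ ω ∘ₗ lTensor (H ⊗[k] H) (Δ ∘ₗ S))
          ∘ₗ (TensorProduct.assoc k (H ⊗[k] H) H H).symm.toLinearMap)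
          ∘ₗ map Δ Δ ∘ₗ Δ := by
        rw [st_T Δ hH.coassoc]; simp only [LinearMap.comp_assoc]
    _ = QQ ω ∘ₗ (lTensor (H ⊗[k] H) (KK Δ μ S) ∘ₗ map Δ Δ) ∘ₗ Δ := by
        rw [st_SL]; simp only [LinearMap.comp_assoc]
    _ = QQ ω ∘ₗ map Δ (KK Δ μ S ∘ₗ Δ) ∘ₗ Δ := by
        rw [← st_map_splitL' Δ (KK Δ μ S) Δ]
    _ = QQ ω ∘ₗ map Δ (TensorProduct.mk k H H e ∘ₗ S) ∘ₗ Δ := by rw [hK]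
    _ = (QQ ω ∘ₗ lTensor (H ⊗[k] H) (TensorProduct.mk k H H e)) ∘ₗ map Δ S ∘ₗ Δ := by
        rw [st_map_splitL' Δ (TensorProduct.mk k H H e) S]
        simp only [LinearMap.comp_assoc]
    _ = ((ω ∘ₗ lTensor H (TensorProduct.comm k H H).toLinearMap
          ∘ₗ (TensorProduct.assoc k H H H).toLinearMap).smulRight e) ∘ₗ map Δ S ∘ₗ Δ := by
        rw [hQ1]
    _ = ((ω ∘ₗ lTensor H (TensorProduct.comm k H H).toLinearMap
          ∘ₗ (TensorProduct.assoc k H H H).toLinearMap) ∘ₗ map Δ S ∘ₗ Δ).smulRight e := by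
        rw [st_smulRight_comp]
    _ = ε.smulRight e := by
        rw [show ((ω ∘ₗ lTensor H (TensorProduct.comm k H H).toLinearMap
          ∘ₗ (TensorProduct.assoc k H H H).toLinearMap) ∘ₗ map Δ S ∘ₗ Δ)
          = (ω ∘ₗ lTensor H (TensorProduct.comm k H H).toLinearMap
          ∘ₗ (TensorProduct.assoc k H H H).toLinearMap ∘ₗ map Δ S ∘ₗ Δ) from by
            simp only [LinearMap.comp_assoc], hphi Δ ε ω S hH.coassoc hcoc hS.cond3]

end Main
end DQBAux

open DQB TensorProduct LinearMap in
/-- For a cocommutative dual quasi-bialgebra with preantipode `S` and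
resulting antipode `s`, one has `S(h) = ε(S(h₁)) s(h₂)`, i.e. `S = (ε ∘ S) * s` in
convolution. -/
theorem preantipode_eq_conv (k : Type*) [Field k] (H : Type*) [AddCommGroup H] [Module k H]
    (Δ : H →ₗ[k] H ⊗[k] H) (ε : H →ₗ[k] k) (μ : H ⊗[k] H →ₗ[k] H) (e : H)
    (ω ωInv : H ⊗[k] (H ⊗[k] H) →ₗ[k] k) (S : H →ₗ[k] H)
    (hH : IsDualQuasiBialgebra k H Δ ε μ e ω ωInv)
    (hS : IsPreantipode k H Δ ε μ e ω S)
    (hcoc : (TensorProduct.comm k H H).toLinearMap ∘ₗ Δ = Δ) :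
    S = (TensorProduct.lid k H).toLinearMap
      ∘ₗ TensorProduct.map (ε ∘ₗ S) (sAntipode k H Δ ω S) ∘ₗ Δ := by
  classical
  set s := DQB.sAntipode k H Δ ω S with hs
  set β := ε ∘ₗ S with hβ
  have hassoc := DQBAux.mu_assoc Δ ε μ e ω ωInv hH hcoc
  have h5 : DQBAux.cv Δ μ s LinearMap.id = ε.smulRight e := by
    have h := DQBAux.step3 Δ ε μ e ω ωInv S hH hS hcoc
    unfold DQBAux.cv
    have hmap : map s (LinearMap.id (M := H)) = rTensor H s := rfl
    rw [hmap]; exact h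
  have h3 : DQBAux.cv Δ μ LinearMap.id S = β.smulRight e := by
    unfold DQBAux.cv
    have hmap : map (LinearMap.id (M := H)) S = lTensor H S := rfl
    rw [hmap]; exact DQBAux.claimA Δ ε μ e ω ωInv S hH hS
  have h4 := DQBAux.cv_assoc Δ μ hH.coassoc hassoc s LinearMap.id S
  have hR : DQBAux.cv Δ μ s (β.smulRight e) = DQBAux.cvR Δ s β := by
    unfold DQBAux.cv DQBAux.cvR
    rw [← LinearMap.comp_assoc, DQBAux.st_mul_mapR μ e hH.mul_one]
    simp only [LinearMap.comp_assoc]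
  have hG : (TensorProduct.lid k H).toLinearMap ∘ₗ TensorProduct.map β s ∘ₗ Δ
      = DQBAux.cvL Δ β s := by
    unfold DQBAux.cvL
    rw [← LinearMap.comp_assoc, DQBAux.st_lid_map]
    simp only [LinearMap.comp_assoc]
  have h6 : DQBAux.cv Δ μ (ε.smulRight e) S = S := by
    unfold DQBAux.cv
    rw [← LinearMap.comp_assoc, DQBAux.st_mul_mapL μ e hH.one_mul]
    simp only [LinearMap.comp_assoc]
    rw [hH.counit_comul, LinearMap.comp_id]
  calc S = DQBAux.cv Δ μ (ε.smulRight e) S := h6.symm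
    _ = DQBAux.cv Δ μ (DQBAux.cv Δ μ s LinearMap.id) S := by rw [h5]
    _ = DQBAux.cv Δ μ s (DQBAux.cv Δ μ LinearMap.id S) := h4.symm
    _ = DQBAux.cv Δ μ s (β.smulRight e) := by rw [h3]
    _ = DQBAux.cvR Δ s β := hR
    _ = DQBAux.cvL Δ β s := (DQBAux.cvL_eq_cvR Δ hcoc β s).symm
    _ = (TensorProduct.lid k H).toLinearMap ∘ₗ TensorProduct.map β s ∘ₗ Δ := hG.symm
end
end

section
/- Let (H, m, u, Δ, ε, ω) be a dual quasi-bialgebra, M a right dual quasi-Hopf H-bicomodule, and τ: M → M^{coH} a k-linear map into the coinvariants satisfying τ(m₀)m₁ = m for all m ∈ M. Then τ satisfies τ(mh) = ε(h)m for all m ∈ M^{coH}, h ∈ H, if and only if τ satisfies both: (a) τ(mh) = ω⁻¹(τ(m₀)₋₁ ⊗ m₁ ⊗ h) τ(m₀)₀ for all m ∈ M, h ∈ H, and (b) m₋₁ ⊗ τ(m₀) = τ(m₀)₋₁ m₁ ⊗ τ(m₀)₀ for all m ∈ M. -/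
open TensorProduct LinearMap

noncomputable section

namespace DQB

open TensorProduct LinearMap

variable (k : Type*) [CommRing k] (H : Type*) [AddCommGroup H] [Module k H]
variable (Δ : H →ₗ[k] H ⊗[k] H) (ε : H →ₗ[k] k)
variable (μ : H ⊗[k] H →ₗ[k] H) (e : H) (ω ωInv : H ⊗[k] (H ⊗[k] H) →ₗ[k] k)
variable (M : Type*) [AddCommGroup M] [Module k M]
variable (ρl : M →ₗ[k] H ⊗[k] M) (ρr : M →ₗ[k] M ⊗[k] H) (act : M ⊗[k] H →ₗ[k] M)

/-- The right-hand side `m ⊗ h ⊗ l ↦ ω⁻¹(m₋₁ ⊗ h₁ ⊗ l₁) m₀(h₂l₂) ω(m₁ ⊗ h₃ ⊗ l₃)` of the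
quasi-associativity axiom of a right dual quasi-Hopf bicomodule. -/
def bicomQuasiRHS : M ⊗[k] (H ⊗[k] H) →ₗ[k] M :=
  (TensorProduct.lid k M).toLinearMap
    ∘ₗ lTensor k (TensorProduct.rid k M).toLinearMap
    ∘ₗ TensorProduct.map ωInv
        (TensorProduct.map (act ∘ₗ lTensor M μ) ω
          ∘ₗ (TensorProduct.tensorTensorTensorComm k M H (H ⊗[k] H) (H ⊗[k] H)).toLinearMap
          ∘ₗ lTensor (M ⊗[k] H) (TensorProduct.tensorTensorTensorComm k H H H H).toLinearMap)
    ∘ₗ (TensorProduct.tensorTensorTensorComm k H (M ⊗[k] H) (H ⊗[k] H)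
        ((H ⊗[k] H) ⊗[k] (H ⊗[k] H))).toLinearMap
    ∘ₗ lTensor (H ⊗[k] (M ⊗[k] H))
        (TensorProduct.tensorTensorTensorComm k H (H ⊗[k] H) H (H ⊗[k] H)).toLinearMap
    ∘ₗ TensorProduct.map (lTensor H ρr ∘ₗ ρl)
        (TensorProduct.map (comul2 k H Δ) (comul2 k H Δ))

/-- A right dual quasi-Hopf `H`-bicomodule structure on `M`, with left coaction `ρl`, right
coaction `ρr` and right `H`-action `act`. -/
structure IsRightDQHBicomodule : Prop where
  lcoassoc : (rTensor M Δ) ∘ₗ ρl =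
    (TensorProduct.assoc k H H M).symm.toLinearMap ∘ₗ (lTensor H ρl) ∘ₗ ρl
  lcounit : (TensorProduct.lid k M).toLinearMap ∘ₗ (rTensor M ε) ∘ₗ ρl = LinearMap.id
  rcoassoc : (rTensor H ρr) ∘ₗ ρr =
    (TensorProduct.assoc k M H H).symm.toLinearMap ∘ₗ (lTensor M Δ) ∘ₗ ρr
  rcounit : (TensorProduct.rid k M).toLinearMap ∘ₗ (lTensor M ε) ∘ₗ ρr = LinearMap.id
  bicom : (rTensor H ρl) ∘ₗ ρr =
    (TensorProduct.assoc k H M H).symm.toLinearMap ∘ₗ (lTensor H ρr) ∘ₗ ρl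
  act_one : ∀ m : M, act (m ⊗ₜ[k] e) = m
  act_rcolinear : ρr ∘ₗ act = (TensorProduct.map act μ)
    ∘ₗ (TensorProduct.tensorTensorTensorComm k M H H H).toLinearMap
    ∘ₗ TensorProduct.map ρr Δ
  act_lcolinear : ρl ∘ₗ act = (TensorProduct.map μ act)
    ∘ₗ (TensorProduct.tensorTensorTensorComm k H M H H).toLinearMap
    ∘ₗ TensorProduct.map ρl Δ
  quasi : act ∘ₗ rTensor H act ∘ₗ (TensorProduct.assoc k M H H).symm.toLinearMap =
    bicomQuasiRHS k H Δ μ ω ωInv M ρl ρr act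

end DQB

set_option maxHeartbeats 1000000 in
open DQB TensorProduct LinearMap in
/-- Let `M` be a right dual quasi-Hopf `H`-bicomodule over a dual
quasi-bialgebra `H` and `τ : M → M^{coH}` a linear map with `τ(m₀)m₁ = m`.  Then
`τ(mh) = ε(h)m` for coinvariant `m` iff `τ` satisfies
`τ(mh) = ω⁻¹(τ(m₀)₋₁ ⊗ m₁ ⊗ h) τ(m₀)₀` and `m₋₁ ⊗ τ(m₀) = τ(m₀)₋₁m₁ ⊗ τ(m₀)₀`. -/
theorem tau_simple_iff (k : Type*) [Field k] (H : Type*) [AddCommGroup H] [Module k H]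
    (Δ : H →ₗ[k] H ⊗[k] H) (ε : H →ₗ[k] k) (μ : H ⊗[k] H →ₗ[k] H) (e : H)
    (ω ωInv : H ⊗[k] (H ⊗[k] H) →ₗ[k] k)
    (hH : IsDualQuasiBialgebra k H Δ ε μ e ω ωInv)
    (M : Type*) [AddCommGroup M] [Module k M]
    (ρl : M →ₗ[k] H ⊗[k] M) (ρr : M →ₗ[k] M ⊗[k] H) (act : M ⊗[k] H →ₗ[k] M)
    (hM : IsRightDQHBicomodule k H Δ ε μ e ω ωInv M ρl ρr act)
    (τ : M →ₗ[k] M)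
    (hcoinv : ∀ m : M, ρr (τ m) = τ m ⊗ₜ[k] e)
    (hinv : act ∘ₗ rTensor H τ ∘ₗ ρr = LinearMap.id) :
    (∀ (m : M) (h : H), ρr m = m ⊗ₜ[k] e → τ (act (m ⊗ₜ[k] h)) = ε h • m) ↔
      (τ ∘ₗ act =
        (TensorProduct.rid k M).toLinearMap
          ∘ₗ lTensor M ωInv
          ∘ₗ (TensorProduct.assoc k M H (H ⊗[k] H)).toLinearMap
          ∘ₗ rTensor (H ⊗[k] H) (TensorProduct.comm k H M).toLinearMap
          ∘ₗ (TensorProduct.assoc k (H ⊗[k] M) H H).toLinearMap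
          ∘ₗ rTensor H (rTensor H (ρl ∘ₗ τ))
          ∘ₗ rTensor H ρr ∧
       lTensor H τ ∘ₗ ρl =
        rTensor M μ ∘ₗ exch k H M H ∘ₗ rTensor H (ρl ∘ₗ τ) ∘ₗ ρr) := by
  classical
  have hτm : ∀ m : M, act (rTensor H τ (ρr m)) = m := by
    intro m
    simpa [LinearMap.comp_apply] using LinearMap.congr_fun hinv m
  have hτfix : ∀ n : M, ρr n = n ⊗ₜ[k] e → τ n = n := by
    intro n hn
    have h1 := hτm n
    rw [hn] at h1
    simpa [hM.act_one] using h1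
  have hcc : ∀ a : H, (TensorProduct.lid k H) (rTensor H ε (Δ a)) = a := by
    intro a
    simpa [LinearMap.comp_apply] using LinearMap.congr_fun hH.counit_comul a
  have hmc : ∀ a : H, (TensorProduct.rid k H) (lTensor H ε (Δ a)) = a := by
    intro a
    simpa [LinearMap.comp_apply] using LinearMap.congr_fun hH.comul_counit a
  have hcounit2 : ∀ d : H ⊗[k] H,
      counit2 k H ε d = ε ((TensorProduct.lid k H) (rTensor H ε d)) := by
    intro d
    induction d using TensorProduct.induction_on with
    | zero => simp [counit2]
    | tmul a b => simp [counit2, LinearMap.mul'_apply, smul_eq_mul]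
    | add x y hx hy => simp [map_add, hx, hy]
  have hcounit2Δ : ∀ a : H, counit2 k H ε (Δ a) = ε a := by
    intro a; rw [hcounit2, hcc]
  have hcollapse : ∀ u : H,
      (TensorProduct.rid k H) (lTensor H (counit2 k H ε) (comul2 k H Δ u)) = u := by
    intro u
    have key : ∀ d : H ⊗[k] H,
        (TensorProduct.rid k H) (lTensor H (counit2 k H ε) (lTensor H Δ d)) =
          (TensorProduct.rid k H) (lTensor H ε d) := by
      intro d
      induction d using TensorProduct.induction_on with
      | zero => simp
      | tmul a b => simp [hcounit2Δ]
      | add x y hx hy => simp [map_add, hx, hy]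
    have h2 : comul2 k H Δ u = lTensor H Δ (Δ u) := rfl
    rw [h2, key (Δ u), hmc]
  have hωInv : ∀ (a b : H), ωInv (a ⊗ₜ[k] (e ⊗ₜ[k] b)) = ε a * ε b := by
    have S : ∀ (x d : H ⊗[k] H),
        LinearMap.mul' k k (TensorProduct.map ω ωInv
          ((tensorTensorTensorComm k H H (H ⊗[k] H) (H ⊗[k] H))
            (x ⊗ₜ[k] ((tensorTensorTensorComm k H H H H) ((e ⊗ₜ[k] e) ⊗ₜ[k] d))))) =
        ωInv ((TensorProduct.lid k H) (rTensor H ε x) ⊗ₜ[k]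
          (e ⊗ₜ[k] (TensorProduct.lid k H) (rTensor H ε d))) := by
      intro x d
      induction x using TensorProduct.induction_on with
      | zero => simp
      | tmul a₁ a₂ =>
        induction d using TensorProduct.induction_on with
        | zero => simp
        | tmul b₁ b₂ =>
          simp only [tensorTensorTensorComm_tmul, map_tmul, LinearMap.mul'_apply,
            hH.omega_unital₂, rTensor_tmul, lid_tmul, smul_tmul', tmul_smul, map_smul,
            smul_eq_mul]
          simp only [smul_tmul, tmul_smul, map_smul, smul_eq_mul]
          ring
        | add p q hp hq =>
          simp only [tmul_add, map_add, hp, hq, add_tmul]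
      | add p q hp hq =>
        simp only [add_tmul, map_add, hp, hq, tmul_add]
    intro a b
    have h1 := LinearMap.congr_fun hH.omega_invL (a ⊗ₜ[k] (e ⊗ₜ[k] b))
    simp only [conv, comul3, comulT, counit3, counit2, LinearMap.comp_apply, map_tmul,
      LinearEquiv.coe_coe, hH.comul_one, LinearMap.mul'_apply, hH.counit_one, one_mul] at h1
    rw [S (Δ a) (Δ b), hcc, hcc] at h1
    simpa using h1
  -- flatness presentation of coinvariants
  set g : M →ₗ[k] M ⊗[k] H := ρr - (TensorProduct.mk k M H).flip e with hgdef
  have hker : ∀ n : ↥(LinearMap.ker g), ρr (n : M) = (n : M) ⊗ₜ[k] e := by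
    intro n
    have h0 : (ρr - (TensorProduct.mk k M H).flip e) (n : M) = 0 := n.2
    simp only [LinearMap.sub_apply, LinearMap.flip_apply, TensorProduct.mk_apply] at h0
    exact sub_eq_zero.mp h0
  have hmk : ∀ x : H ⊗[k] M, lTensor H ((TensorProduct.mk k M H).flip e) x
      = (TensorProduct.assoc k H M H) (x ⊗ₜ[k] e) := by
    intro x
    induction x using TensorProduct.induction_on with
    | zero => simp
    | tmul a m' => simp [TensorProduct.mk_apply, LinearMap.flip_apply]
    | add p q hp hq => simp [add_tmul, map_add, hp, hq]
  have hcoactN : ∀ n : M, ρr n = n ⊗ₜ[k] e →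
      lTensor H ρr (ρl n) = (TensorProduct.assoc k H M H) (ρl n ⊗ₜ[k] e) := by
    intro n hn
    have hb := LinearMap.congr_fun hM.bicom n
    simp only [LinearMap.comp_apply, hn, rTensor_tmul, LinearEquiv.coe_coe] at hb
    have h2 := congrArg (TensorProduct.assoc k H M H) hb
    simpa using h2.symm
  have hflat : ∀ n : M, ρr n = n ⊗ₜ[k] e →
      ∃ y : H ⊗[k] ↥(LinearMap.ker g), lTensor H (LinearMap.ker g).subtype y = ρl n := by
    intro n hn
    have hex := Module.Flat.lTensor_exact H (LinearMap.exact_subtype_ker_map g)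
    have hz : lTensor H g (ρl n) = 0 := by
      have h1 : lTensor H g = lTensor H ρr - lTensor H ((TensorProduct.mk k M H).flip e) := by
        rw [hgdef, LinearMap.lTensor_sub]
      rw [h1, LinearMap.sub_apply, hcoactN n hn, hmk, sub_self]
    obtain ⟨y, hy⟩ := (hex (ρl n)).mp hz
    exact ⟨y, hy⟩
  constructor
  · intro hP
    have hPn : ∀ (n' : ↥(LinearMap.ker g)) (x : H),
        τ (act ((n' : M) ⊗ₜ[k] x)) = ε x • (n' : M) := fun n' x => hP _ x (hker n')
    have hεμ : ∀ x : H ⊗[k] H, ε (μ x) = counit2 k H ε x := fun x =>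
      LinearMap.congr_fun hH.mul_counit x
    -- key lemma for (a)
    have keyC : ∀ n : M, ρr n = n ⊗ₜ[k] e → ∀ u v : H,
        τ (bicomQuasiRHS k H Δ μ ω ωInv M ρl ρr act (n ⊗ₜ[k] (u ⊗ₜ[k] v))) =
        (TensorProduct.rid k M) (lTensor M ωInv ((TensorProduct.assoc k M H (H ⊗[k] H))
          (rTensor (H ⊗[k] H) (TensorProduct.comm k H M).toLinearMap
            (ρl n ⊗ₜ[k] (u ⊗ₜ[k] v))))) := by
      intro n hn u v
      obtain ⟨y, hy⟩ := hflat n hn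
      have hco := hcoactN n hn
      simp only [bicomQuasiRHS, LinearMap.comp_apply, map_tmul, LinearEquiv.coe_coe]
      rw [hco, ← hy]
      conv_rhs => rw [← hcollapse u, ← hcollapse v]
      generalize comul2 k H Δ u = p
      generalize comul2 k H Δ v = q
      clear hy hco hn
      induction y using TensorProduct.induction_on with
      | zero => simp
      | tmul a nn =>
        induction p using TensorProduct.induction_on with
        | zero => simp
        | tmul b R =>
          induction q using TensorProduct.induction_on with
          | zero => simp
          | tmul c S =>
            induction R using TensorProduct.induction_on with
            | zero => simp
            | tmul r₁ r₂ =>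
              induction S using TensorProduct.induction_on with
              | zero => simp
              | tmul s₁ s₂ =>
                simp only [lTensor_tmul, Submodule.subtype_apply, assoc_tmul,
                  tensorTensorTensorComm_tmul, map_tmul, LinearMap.comp_apply,
                  LinearEquiv.coe_coe, comm_tmul, rTensor_tmul, lid_tmul, rid_tmul,
                  hPn, hεμ, counit2, LinearMap.mul'_apply, hH.omega_unital₁,
                  tmul_smul, smul_tmul, map_smul, smul_eq_mul, smul_smul]
                ring_nf
              | add S₁ S₂ hS₁ hS₂ =>
                simp only [map_add, tmul_add, add_tmul, smul_add, hS₁, hS₂]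
            | add R₁ R₂ hR₁ hR₂ =>
              simp only [map_add, tmul_add, add_tmul, smul_add, hR₁, hR₂]
          | add q₁ q₂ hq₁ hq₂ =>
            simp only [map_add, tmul_add, add_tmul, smul_add, hq₁, hq₂]
        | add p₁ p₂ hp₁ hp₂ =>
          simp only [map_add, tmul_add, add_tmul, smul_add, hp₁, hp₂]
      | add y₁ y₂ hy₁ hy₂ =>
        simp only [map_add, tmul_add, add_tmul, smul_add, hy₁, hy₂]
    have ha : τ ∘ₗ act =
        (TensorProduct.rid k M).toLinearMap
          ∘ₗ lTensor M ωInv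
          ∘ₗ (TensorProduct.assoc k M H (H ⊗[k] H)).toLinearMap
          ∘ₗ rTensor (H ⊗[k] H) (TensorProduct.comm k H M).toLinearMap
          ∘ₗ (TensorProduct.assoc k (H ⊗[k] M) H H).toLinearMap
          ∘ₗ rTensor H (rTensor H (ρl ∘ₗ τ))
          ∘ₗ rTensor H ρr := by
      apply TensorProduct.ext'
      intro m h
      have hGa : ∀ w : M ⊗[k] H,
          τ (act (act (rTensor H τ w) ⊗ₜ[k] h)) =
          (TensorProduct.rid k M) (lTensor M ωInv ((TensorProduct.assoc k M H (H ⊗[k] H))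
            (rTensor (H ⊗[k] H) (TensorProduct.comm k H M).toLinearMap
              ((TensorProduct.assoc k (H ⊗[k] M) H H)
                (rTensor H (rTensor H (ρl ∘ₗ τ)) (w ⊗ₜ[k] h)))))) := by
        intro w
        induction w using TensorProduct.induction_on with
        | zero => simp
        | tmul m' u =>
          have hq := LinearMap.congr_fun hM.quasi ((τ m') ⊗ₜ[k] (u ⊗ₜ[k] h))
          simp only [LinearMap.comp_apply, LinearEquiv.coe_coe, assoc_symm_tmul,
            rTensor_tmul] at hq
          rw [rTensor_tmul, hq]
          simp only [rTensor_tmul, LinearMap.comp_apply, assoc_tmul]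
          exact keyC (τ m') (hcoinv m') u h
        | add p q hp hq =>
          simp only [map_add, add_tmul]
          rw [hp, hq]
      have h2 := hGa (ρr m)
      simp only [rTensor_tmul] at h2
      simp only [LinearMap.comp_apply, LinearEquiv.coe_coe, rTensor_tmul]
      conv_lhs => rw [← hτm m]
      exact h2
    -- key lemma for (b)
    have keyBgen : ∀ (y : H ⊗[k] ↥(LinearMap.ker g)) (d : H ⊗[k] H),
        lTensor H τ (TensorProduct.map μ act
          ((tensorTensorTensorComm k H M H H)
            ((lTensor H (LinearMap.ker g).subtype y) ⊗ₜ[k] d)))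
        = rTensor M μ (exch k H M H ((lTensor H (LinearMap.ker g).subtype y) ⊗ₜ[k]
            (TensorProduct.rid k H) (lTensor H ε d))) := by
      intro y d
      induction y using TensorProduct.induction_on with
      | zero => simp
      | tmul a n =>
        induction d using TensorProduct.induction_on with
        | zero => simp
        | tmul u₁ u₂ =>
          have hp := hP (n : M) u₂ (hker n)
          simp only [lTensor_tmul, Submodule.subtype_apply, tensorTensorTensorComm_tmul,
            map_tmul, hp, exch, LinearMap.comp_apply, LinearEquiv.coe_coe, assoc_tmul,
            comm_tmul, assoc_symm_tmul, rTensor_tmul, rid_tmul, map_smul]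
          simp only [smul_tmul, tmul_smul, map_smul]
        | add p q hp hq =>
          simp only [tmul_add, map_add, hp, hq]
      | add p q hp hq =>
        simp only [add_tmul, map_add, hp, hq]
    have keyB : ∀ n : M, ρr n = n ⊗ₜ[k] e → ∀ u : H,
        lTensor H τ (ρl (act (n ⊗ₜ[k] u))) = rTensor M μ (exch k H M H (ρl n ⊗ₜ[k] u)) := by
      intro n hn u
      obtain ⟨y, hy⟩ := hflat n hn
      have hl := LinearMap.congr_fun hM.act_lcolinear (n ⊗ₜ[k] u)
      simp only [LinearMap.comp_apply, map_tmul, LinearEquiv.coe_coe] at hl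
      rw [hl, ← hy]
      have h3 := keyBgen y (Δ u)
      rwa [hmc u] at h3
    refine ⟨ha, ?_⟩
    apply LinearMap.ext; intro m
    simp only [LinearMap.comp_apply]
    have hGb : ∀ w : M ⊗[k] H,
        lTensor H τ (ρl (act (rTensor H τ w))) =
          rTensor M μ (exch k H M H (rTensor H (ρl ∘ₗ τ) w)) := by
      intro w
      induction w using TensorProduct.induction_on with
      | zero => simp
      | tmul m' u => simpa [LinearMap.comp_apply] using keyB (τ m') (hcoinv m') u
      | add p q hp hq => simp only [map_add, hp, hq]
    conv_lhs => rw [← hτm m]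
    exact hGb (ρr m)
  · rintro ⟨hA, _hB⟩
    intro m h hm
    have hτm' : τ m = m := hτfix m hm
    have h1 := LinearMap.congr_fun hA (m ⊗ₜ[k] h)
    simp only [LinearMap.comp_apply, LinearEquiv.coe_coe, rTensor_tmul] at h1
    rw [hm] at h1
    simp only [rTensor_tmul, LinearMap.comp_apply, hτm', assoc_tmul, LinearEquiv.coe_coe] at h1
    have hx : ∀ x : H ⊗[k] M,
        (TensorProduct.rid k M) (lTensor M ωInv ((TensorProduct.assoc k M H (H ⊗[k] H))
          ((TensorProduct.comm k H M) x ⊗ₜ[k] (e ⊗ₜ[k] h)))) =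
        ε h • (TensorProduct.lid k M) (rTensor M ε x) := by
      intro x
      induction x using TensorProduct.induction_on with
      | zero => simp
      | tmul a n => simp [hωInv a h, smul_smul, mul_comm]
      | add p q hp hq => simp only [add_tmul, map_add, hp, hq, smul_add]
    rw [hx (ρl m)] at h1
    have hlc : (TensorProduct.lid k M) (rTensor M ε (ρl m)) = m := by
      simpa [LinearMap.comp_apply] using LinearMap.congr_fun hM.lcounit m
    rw [hlc] at h1
    exact h1
end
end

section
/- Let G be a monoid and let ω be a reassociator making the monoid algebra H = kG into a dual quasi-bialgebra (with its usual algebra and coalgebra structure). Then H has a preantipode if and only if G is a group; in that case a preantipode is given by S(g) = ω(g ⊗ g⁻¹ ⊗ g)⁻¹ g⁻¹ for each g ∈ G. -/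
open TensorProduct LinearMap

noncomputable section

namespace DQB
variable (k : Type*) [CommRing k] (G : Type*) [Monoid G]

/-- The grouplike comultiplication of a monoid algebra. -/
def maComul : MonoidAlgebra k G →ₗ[k] MonoidAlgebra k G ⊗[k] MonoidAlgebra k G :=
  Finsupp.lsum k (fun g => LinearMap.toSpanSingleton k _
    ((MonoidAlgebra.single g (1 : k)) ⊗ₜ[k] (MonoidAlgebra.single g (1 : k))))
    ∘ₗ (MonoidAlgebra.coeffLinearEquiv k).toLinearMap

/-- The counit of a monoid algebra. -/
def maCounit : MonoidAlgebra k G →ₗ[k] k :=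
  Finsupp.lsum k (fun (_ : G) => (LinearMap.id : k →ₗ[k] k))
    ∘ₗ (MonoidAlgebra.coeffLinearEquiv k).toLinearMap

/-- The multiplication of a monoid algebra as a linear map. -/
def maMul : MonoidAlgebra k G ⊗[k] MonoidAlgebra k G →ₗ[k] MonoidAlgebra k G :=
  LinearMap.mul' k (MonoidAlgebra k G)

end DQB

/-!
Because the comultiplication of `k[G]` is grouplike, the first two preantipode axioms evaluated
at `g` read `∑ₓ cₓ (x g ⊗ x) = 1 ⊗ ∑ₓ cₓ x` and `∑ₓ cₓ (x ⊗ g x) = ∑ₓ cₓ x ⊗ 1`, where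
`S(g) = ∑ₓ cₓ x`; comparing coefficients, every `x` in the support of `S(g)` is a two-sided
inverse of `g`. The third axiom gives `ω(g ⊗ S(g) ⊗ g) = 1`, so `S(g) ≠ 0`; hence `g` is a unit,
`S(g)` is a multiple of `g⁻¹`, and the multiple is `ω(g ⊗ g⁻¹ ⊗ g)⁻¹`. Conversely, this value of
`ω` is invertible because `ω` is convolution invertible and `g ⊗ g⁻¹ ⊗ g` is grouplike, and the
formula then satisfies the three axioms on the basis.
-/

namespace DQB

open TensorProduct LinearMap MonoidAlgebra
open scoped MonoidAlgebra

section Algebra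

variable {k A : Type*} [CommRing k] [Ring A] [Algebra k A]

theorem rTensor_mul'_exch (t : A ⊗[k] A) (a : A) :
    rTensor A (mul' k A) (exch k A A A (t ⊗ₜ a)) = rTensor A (mulRight k a) t := by
  induction t with
  | zero => simp
  | tmul x y => simp [exch]
  | add x y hx hy => simp only [add_tmul, map_add, hx, hy]

theorem lTensor_mul'_exch' (a : A) (t : A ⊗[k] A) :
    lTensor A (mul' k A) (exch' k A A A (a ⊗ₜ t)) = lTensor A (mulLeft k a) t := by
  induction t with
  | zero => simp
  | tmul x y => simp [exch']
  | add x y hx hy => simp only [tmul_add, map_add, hx, hy]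

end Algebra

section MonoidAlgebra

variable {k G : Type*} [CommRing k]

@[simp]
theorem maComul_single (g : G) (r : k) :
    maComul k G (single g r) = single g r ⊗ₜ single g 1 := by
  simp [maComul, smul_tmul']

@[simp]
theorem maCounit_single (g : G) (r : k) : maCounit k G (single g r) = r := by
  simp [maCounit]

@[simp]
theorem basis_repr_apply (v : k[G]) : (basis G k).repr v = v.coeff := rfl

theorem rid_map_coord_maComul {M : Type*} [AddCommGroup M] [Module k M] (f : k[G] →ₗ[k] M)
    (x : G) (v : k[G]) :
    TensorProduct.rid k M (map f ((basis G k).coord x) (maComul k G v)) =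
      f (single x (v.coeff x)) := by
  suffices (TensorProduct.rid k M).toLinearMap ∘ₗ map f ((basis G k).coord x) ∘ₗ
      maComul k G = f ∘ₗ lsingle x ∘ₗ (basis G k).coord x from LinearMap.congr_fun this v
  ext y
  by_cases h : y = x <;> simp [h]

theorem lid_map_coord_maComul {M : Type*} [AddCommGroup M] [Module k M] (f : k[G] →ₗ[k] M)
    (x : G) (v : k[G]) :
    TensorProduct.lid k M (map ((basis G k).coord x) f (maComul k G v)) =
      f (single x (v.coeff x)) := by
  suffices (TensorProduct.lid k M).toLinearMap ∘ₗ map ((basis G k).coord x) f ∘ₗ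
      maComul k G = f ∘ₗ lsingle x ∘ₗ (basis G k).coord x from LinearMap.congr_fun this v
  ext y
  by_cases h : y = x <;> simp [h]

theorem apply_tmul_single_tmul {M : Type*} [AddCommGroup M] [Module k M]
    (φ : M ⊗[k] (k[G] ⊗[k] M) →ₗ[k] k) (x z : M) (a : G) (r : k) :
    φ (x ⊗ₜ (single a r ⊗ₜ z)) = r * φ (x ⊗ₜ (single a 1 ⊗ₜ z)) := by
  rw [← smul_eq_mul, ← map_smul, ← tmul_smul, smul_tmul', smul_single', mul_one]

end MonoidAlgebra

section Preantipode

variable {k G : Type*} [CommRing k] [Monoid G]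
  {ω : k[G] ⊗[k] (k[G] ⊗[k] k[G]) →ₗ[k] k} {S : k[G] →ₗ[k] k[G]}

theorem IsDualQuasiBialgebra.omega_single_ne_zero [Nontrivial k]
    {ωInv : k[G] ⊗[k] (k[G] ⊗[k] k[G]) →ₗ[k] k}
    (hH : IsDualQuasiBialgebra k k[G] (maComul k G) (maCounit k G) (maMul k G) 1 ω ωInv)
    (a b c : G) : ω (single a 1 ⊗ₜ (single b 1 ⊗ₜ single c 1)) ≠ 0 := by
  have := LinearMap.congr_fun hH.omega_invR (single a 1 ⊗ₜ (single b 1 ⊗ₜ single c 1))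
  exact right_ne_zero_of_mul_eq_one (by simpa [conv, comul3, comulT, counit3, counit2] using this)

theorem IsPreantipode.mul_eq_one_of_coeff_ne_zero
    (hS : IsPreantipode k k[G] (maComul k G) (maCounit k G) (maMul k G) 1 ω S) {g x : G}
    (hx : (S (single g 1)).coeff x ≠ 0) : x * g = 1 ∧ g * x = 1 := by
  set v := S (single g 1)
  have hcond1 : rTensor _ (mulRight k (single g 1)) (maComul k G v) = 1 ⊗ₜ v := by
    have := LinearMap.congr_fun hS.cond1 (single g 1)
    simp only [coe_comp, Function.comp_apply, maComul_single, rTensor_tmul] at this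
    rwa [← rTensor_mul'_exch]
  have hcond2 : lTensor _ (mulLeft k (single g 1)) (maComul k G v) = v ⊗ₜ 1 := by
    have := LinearMap.congr_fun hS.cond2 (single g 1)
    simp only [coe_comp, Function.comp_apply, maComul_single, lTensor_tmul] at this
    rwa [← lTensor_mul'_exch']
  constructor
  · have hx₁ := congr_arg (TensorProduct.rid k k[G] ∘ lTensor k[G] ((basis G k).coord x)) hcond1
    simp only [Function.comp_apply, ← LinearMap.comp_apply (lTensor _ _), lTensor_comp_rTensor,
      rid_map_coord_maComul, mulRight_apply, single_mul_single, mul_one, one_def, lTensor_tmul,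
      Module.Basis.coord_apply, basis_repr_apply, rid_tmul, smul_single, smul_eq_mul] at hx₁
    exact single_left_injective hx hx₁
  · have hx₂ := congr_arg (TensorProduct.lid k k[G] ∘ rTensor k[G] ((basis G k).coord x)) hcond2
    simp only [Function.comp_apply, ← LinearMap.comp_apply (rTensor _ _), rTensor_comp_lTensor,
      lid_map_coord_maComul, mulLeft_apply, single_mul_single, one_mul, one_def, rTensor_tmul,
      Module.Basis.coord_apply, basis_repr_apply, lid_tmul, smul_single, smul_eq_mul,
      mul_one] at hx₂
    exact single_left_injective hx hx₂

theorem IsPreantipode.omega_single_apply_single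
    (hS : IsPreantipode k k[G] (maComul k G) (maCounit k G) (maMul k G) 1 ω S) (g : G) :
    ω (single g 1 ⊗ₜ (S (single g 1) ⊗ₜ single g 1)) = 1 := by
  simpa [comul2] using LinearMap.congr_fun hS.cond3 (single g 1)

theorem IsPreantipode.exists_coeff_ne_zero [Nontrivial k]
    (hS : IsPreantipode k k[G] (maComul k G) (maCounit k G) (maMul k G) 1 ω S) (g : G) :
    ∃ x, (S (single g 1)).coeff x ≠ 0 := by
  by_contra! h
  have hzero : S (single g 1) = 0 := coeff_injective (Finsupp.ext h)
  simpa [hzero] using hS.omega_single_apply_single g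

theorem IsPreantipode.isUnit [Nontrivial k]
    (hS : IsPreantipode k k[G] (maComul k G) (maCounit k G) (maMul k G) 1 ω S) (g : G) :
    IsUnit g := by
  obtain ⟨x, hx⟩ := hS.exists_coeff_ne_zero g
  obtain ⟨hxg, hgx⟩ := hS.mul_eq_one_of_coeff_ne_zero hx
  exact isUnit_iff_exists.mpr ⟨x, hgx, hxg⟩

end Preantipode

section Field

variable {k G : Type*} [Field k] [Monoid G]
  {ω : k[G] ⊗[k] (k[G] ⊗[k] k[G]) →ₗ[k] k} {S : k[G] →ₗ[k] k[G]}

theorem IsPreantipode.apply_single_of_mul_eq_one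
    (hS : IsPreantipode k k[G] (maComul k G) (maCounit k G) (maMul k G) 1 ω S) {g h : G}
    (hgh : g * h = 1) :
    S (single g 1) = (ω (single g 1 ⊗ₜ (single h 1 ⊗ₜ single g 1)))⁻¹ • single h 1 := by
  set c := (S (single g 1)).coeff h
  have hsupp : S (single g 1) = single h c := by
    refine coeff_injective (Finsupp.support_subset_singleton.mp fun x hx => ?_)
    exact Finset.mem_singleton.mpr
      (left_inv_eq_right_inv
        (hS.mul_eq_one_of_coeff_ne_zero (Finsupp.mem_support_iff.mp hx)).1 hgh)
  have hc : c * ω (single g 1 ⊗ₜ (single h 1 ⊗ₜ single g 1)) = 1 := by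
    rw [← apply_tmul_single_tmul, ← hsupp, hS.omega_single_apply_single g]
  rw [hsupp, eq_inv_of_mul_eq_one_left hc, smul_single', mul_one]

variable (ω) in
def preantipodeOfInv (inv : G → G) : k[G] →ₗ[k] k[G] :=
  (basis G k).constr k fun g =>
    (ω (single g 1 ⊗ₜ (single (inv g) 1 ⊗ₜ single g 1)))⁻¹ • single (inv g) 1

@[simp]
theorem preantipodeOfInv_single (inv : G → G) (g : G) :
    preantipodeOfInv ω inv (single g 1) =
      (ω (single g 1 ⊗ₜ (single (inv g) 1 ⊗ₜ single g 1)))⁻¹ • single (inv g) 1 :=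
  (basis G k).constr_basis k _ g

theorem isPreantipode_preantipodeOfInv {ωInv : k[G] ⊗[k] (k[G] ⊗[k] k[G]) →ₗ[k] k}
    (hH : IsDualQuasiBialgebra k k[G] (maComul k G) (maCounit k G) (maMul k G) 1 ω ωInv)
    {inv : G → G} (hinv : ∀ g, g * inv g = 1 ∧ inv g * g = 1) :
    IsPreantipode k k[G] (maComul k G) (maCounit k G) (maMul k G) 1 ω
      (preantipodeOfInv ω inv) := by
  refine ⟨?_, ?_, ?_⟩ <;> ext g
  · simpa [exch, maMul, hinv, MonoidAlgebra.one_def] using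
      smul_tmul (R := k) (R' := k) _ (single (1 : G) (1 : k)) (single (inv g) (1 : k))
  · simp [exch', maMul, hinv, MonoidAlgebra.one_def]
  · simp only [comul2, coe_comp, Function.comp_apply, lsingle_apply, maComul_single, lTensor_tmul,
      rTensor_tmul, preantipodeOfInv_single, smul_single', mul_one, maCounit_single]
    rw [apply_tmul_single_tmul, inv_mul_cancel₀ (hH.omega_single_ne_zero _ _ _)]

end Field

end DQB

open DQB TensorProduct LinearMap in
/-- Let `G` be a monoid and `ω` a reassociator making the monoid algebra
`H = kG` into a dual quasi-bialgebra.  Then `H` has a preantipode iff `G` is a group, in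
which case any preantipode satisfies `S(g) = ω(g ⊗ g⁻¹ ⊗ g)⁻¹ g⁻¹`. -/
theorem monoidAlgebra_preantipode_iff_group (k : Type*) [Field k] (G : Type*) [Monoid G]
    (ω ωInv : MonoidAlgebra k G ⊗[k] (MonoidAlgebra k G ⊗[k] MonoidAlgebra k G) →ₗ[k] k)
    (hH : IsDualQuasiBialgebra k (MonoidAlgebra k G)
      (maComul k G) (maCounit k G) (maMul k G) 1 ω ωInv) :
    ((∃ S, IsPreantipode k (MonoidAlgebra k G)
        (maComul k G) (maCounit k G) (maMul k G) 1 ω S) ↔ ∀ g : G, IsUnit g) ∧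
    (∀ S, IsPreantipode k (MonoidAlgebra k G)
        (maComul k G) (maCounit k G) (maMul k G) 1 ω S →
      ∀ g h : G, g * h = 1 → h * g = 1 →
        S (MonoidAlgebra.single g 1) =
          (ω (MonoidAlgebra.single g 1 ⊗ₜ[k]
              (MonoidAlgebra.single h 1 ⊗ₜ[k] MonoidAlgebra.single g 1)))⁻¹ •
            MonoidAlgebra.single h 1) := by
  refine ⟨⟨fun ⟨S, hS⟩ => hS.isUnit, fun hU => ?_⟩,
    fun S hS g h hgh _ => hS.apply_single_of_mul_eq_one hgh⟩
  choose inv hinv using fun g => isUnit_iff_exists.mp (hU g)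
  exact ⟨_, isPreantipode_preantipodeOfInv hH hinv⟩
end
end

section
/- Let (H, m, u, Δ, ε, ω) be a dual quasi-bialgebra. For every left H-comodule V, the map η_V: V → (V⊗H)^{coH}, v ↦ v ⊗ 1_H, is a bijection onto the right coinvariants of the dual quasi-Hopf bicomodule V⊗H, with inverse induced by v⊗h ↦ ε(h)v. -/
open TensorProduct LinearMap

noncomputable section

namespace DQB

open TensorProduct LinearMap

variable (k : Type*) [CommRing k] (H : Type*) [AddCommGroup H] [Module k H]
variable (Δ : H →ₗ[k] H ⊗[k] H) (μ : H ⊗[k] H →ₗ[k] H)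
variable (ωInv : H ⊗[k] (H ⊗[k] H) →ₗ[k] k)
variable (V : Type*) [AddCommGroup V] [Module k V] (ρV : V →ₗ[k] H ⊗[k] V)

/-- The left coaction `v ⊗ h ↦ v₋₁h₁ ⊗ (v₀ ⊗ h₂)` on `V ⊗ H`. -/
def tensCoactL : V ⊗[k] H →ₗ[k] H ⊗[k] (V ⊗[k] H) :=
  rTensor (V ⊗[k] H) μ
    ∘ₗ (TensorProduct.tensorTensorTensorComm k H V H H).toLinearMap
    ∘ₗ TensorProduct.map ρV Δ

/-- The right coaction `v ⊗ h ↦ (v ⊗ h₁) ⊗ h₂` on `V ⊗ H`. -/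
def tensCoactR : V ⊗[k] H →ₗ[k] (V ⊗[k] H) ⊗[k] H :=
  (TensorProduct.assoc k V H H).symm.toLinearMap ∘ₗ lTensor V Δ

/-- The right action `(v ⊗ h) · l := ω⁻¹(v₋₁ ⊗ h₁ ⊗ l₁) v₀ ⊗ h₂l₂` on `V ⊗ H`. -/
def tensAct : (V ⊗[k] H) ⊗[k] H →ₗ[k] V ⊗[k] H :=
  (TensorProduct.lid k (V ⊗[k] H)).toLinearMap
    ∘ₗ TensorProduct.map (ωInv ∘ₗ (TensorProduct.assoc k H H H).toLinearMap)
        (lTensor V μ ∘ₗ (TensorProduct.assoc k V H H).toLinearMap)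
    ∘ₗ (TensorProduct.tensorTensorTensorComm k (H ⊗[k] H) (V ⊗[k] H) H H).toLinearMap
    ∘ₗ TensorProduct.map
        ((TensorProduct.tensorTensorTensorComm k H V H H).toLinearMap
          ∘ₗ TensorProduct.map ρV Δ) Δ

end DQB

namespace DQB

variable {k : Type*} [CommRing k] {H : Type*} [AddCommGroup H] [Module k H]
variable {Δ : H →ₗ[k] H ⊗[k] H} {ε : H →ₗ[k] k}
variable {V : Type*} [AddCommGroup V] [Module k V]

theorem tensCoactR_tmul_of_comul_eq {e : H} (he : Δ e = e ⊗ₜ[k] e) (v : V) :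
    tensCoactR k H Δ V (v ⊗ₜ[k] e) = (v ⊗ₜ[k] e) ⊗ₜ[k] e := by
  simp [tensCoactR, he]

theorem rTensor_counit_comp_tensCoactR
    (hε : (TensorProduct.lid k H).toLinearMap ∘ₗ rTensor H ε ∘ₗ Δ = LinearMap.id) :
    rTensor H ((TensorProduct.rid k V).toLinearMap ∘ₗ lTensor V ε) ∘ₗ tensCoactR k H Δ V =
      LinearMap.id := by
  have hassoc : rTensor H ((TensorProduct.rid k V).toLinearMap ∘ₗ lTensor V ε)
        ∘ₗ (TensorProduct.assoc k V H H).symm.toLinearMap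
      = lTensor V ((TensorProduct.lid k H).toLinearMap ∘ₗ rTensor H ε) := by
    ext v h l
    simp [TensorProduct.smul_tmul]
  rw [tensCoactR, ← LinearMap.comp_assoc, hassoc, ← lTensor_comp, LinearMap.comp_assoc, hε,
    lTensor_id]

theorem counit_tmul_eq_of_tensCoactR_eq
    (hε : (TensorProduct.lid k H).toLinearMap ∘ₗ rTensor H ε ∘ₗ Δ = LinearMap.id)
    {e : H} {x : V ⊗[k] H} (hx : tensCoactR k H Δ V x = x ⊗ₜ[k] e) :
    (((TensorProduct.rid k V).toLinearMap ∘ₗ lTensor V ε) x) ⊗ₜ[k] e = x := by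
  have hx_id := LinearMap.congr_fun (rTensor_counit_comp_tensCoactR (V := V) hε) x
  rwa [LinearMap.comp_apply, hx, rTensor_tmul] at hx_id

theorem counit_tmul_eq_self {e : H} (he : ε e = 1) (v : V) :
    ((TensorProduct.rid k V).toLinearMap ∘ₗ lTensor V ε) (v ⊗ₜ[k] e) = v := by
  simp [he]

end DQB

open DQB TensorProduct LinearMap in
theorem tens_coinvariants_equiv_general (k : Type*) [Field k]
    (H : Type*) [AddCommGroup H] [Module k H]
    (Δ : H →ₗ[k] H ⊗[k] H) (ε : H →ₗ[k] k) (μ : H ⊗[k] H →ₗ[k] H) (e : H)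
    (ω ωInv : H ⊗[k] (H ⊗[k] H) →ₗ[k] k)
    (hH : IsDualQuasiBialgebra k H Δ ε μ e ω ωInv)
    (V : Type*) [AddCommGroup V] [Module k V] :
    (∀ v : V, tensCoactR k H Δ V (v ⊗ₜ[k] e) = (v ⊗ₜ[k] e) ⊗ₜ[k] e) ∧
    (∀ x : V ⊗[k] H, tensCoactR k H Δ V x = x ⊗ₜ[k] e →
      (((TensorProduct.rid k V).toLinearMap ∘ₗ lTensor V ε) x) ⊗ₜ[k] e = x) ∧
    (∀ v : V, ((TensorProduct.rid k V).toLinearMap ∘ₗ lTensor V ε) (v ⊗ₜ[k] e) = v) :=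
  ⟨tensCoactR_tmul_of_comul_eq hH.comul_one,
    fun _ => counit_tmul_eq_of_tensCoactR_eq hH.counit_comul,
    counit_tmul_eq_self hH.counit_one⟩

open DQB TensorProduct LinearMap in
/-- For a dual quasi-bialgebra `H` and left `H`-comodule `V`, the map
`v ↦ v ⊗ 1_H` is a bijection from `V` onto the right coinvariants of the dual quasi-Hopf
bicomodule `V ⊗ H`, with inverse induced by `v ⊗ h ↦ ε(h)v`. -/
theorem tens_coinvariants_equiv (k : Type*) [Field k]
    (H : Type*) [AddCommGroup H] [Module k H]
    (Δ : H →ₗ[k] H ⊗[k] H) (ε : H →ₗ[k] k) (μ : H ⊗[k] H →ₗ[k] H) (e : H)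
    (ω ωInv : H ⊗[k] (H ⊗[k] H) →ₗ[k] k)
    (hH : IsDualQuasiBialgebra k H Δ ε μ e ω ωInv)
    (V : Type*) [AddCommGroup V] [Module k V] (ρV : V →ₗ[k] H ⊗[k] V)
    (hcoassoc : (rTensor V Δ) ∘ₗ ρV =
      (TensorProduct.assoc k H H V).symm.toLinearMap ∘ₗ (lTensor H ρV) ∘ₗ ρV)
    (hcounit : (TensorProduct.lid k V).toLinearMap ∘ₗ (rTensor V ε) ∘ₗ ρV = LinearMap.id) :
    (∀ v : V, tensCoactR k H Δ V (v ⊗ₜ[k] e) = (v ⊗ₜ[k] e) ⊗ₜ[k] e) ∧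
    (∀ x : V ⊗[k] H, tensCoactR k H Δ V x = x ⊗ₜ[k] e →
      (((TensorProduct.rid k V).toLinearMap ∘ₗ lTensor V ε) x) ⊗ₜ[k] e = x) ∧
    (∀ v : V, ((TensorProduct.rid k V).toLinearMap ∘ₗ lTensor V ε) (v ⊗ₜ[k] e) = v) :=
  tens_coinvariants_equiv_general k H Δ ε μ e ω ωInv hH V
end
end
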